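/- arXiv:1610.01687 — 5 statements merged into one kernel-verified Lean document; each statement's English description precedes it below -/
import Mathlib

section
/- In the setting below, the expected regret of single-stream sampled fictitious play with sampling probability α against an oblivious opponent satisfies E[R_T] ≤ (N²/α) · max_{1 ≤ i,j ≤ N} Σ_{t=1}^T |g_{t,i} − g_{t,j}| · P( Σ_{τ=1}^{t−1} (1+ε_τ)(g_{τ,i} − g_{τ,j}) ≥ 0 and Σ_{τ=1}^{t} (1+ε_τ)(g_{τ,i} − g_{τ,j}) ≤ 0 ). In particular, for α = 1/2 the right-hand side equals 2N² times the maximum over i, j of the stated sum. -/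
/-!
By "be the leader", the leader of the next round beats every fixed action in hindsight on the
weighted payoffs `(1 + ε_t) g_t`, so the weighted regret against the best action is at most
`∑ₜ (1 + ε_t) (g_t(k_{t+1}) - g_t(k_t))`. A round contributes only if the leader moves from `i` to
`j`, which forces `i` to be weakly ahead of `j` before the round and weakly behind after it, and
then it contributes at most `2 |g_{t,i} - g_{t,j}|`. In expectation the weight `1 + ε_t` on the
regret side factors out with mean `2α`, because `k_t` depends only on the earlier samples and on
the tie-breaker; summing the switching bound over the `N²` pairs gives the theorem.
-/

open MeasureTheory ProbabilityTheory Finset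

namespace ProbabilityTheory

variable {Ω β γ δ : Type*} {mΩ : MeasurableSpace Ω} [MeasurableSpace β] [MeasurableSpace γ]
  [MeasurableSpace δ] {μ : Measure Ω} [IsProbabilityMeasure μ] {X : Ω → β} {Y : Ω → γ} {Z : Ω → δ}

lemma IndepFun.prodMk_right_of_prodMk (hX : Measurable X) (hY : Measurable Y) (hZ : Measurable Z)
    (hXY : X ⟂ᵢ[μ] Y) (hXYZ : (fun ω ↦ (X ω, Y ω)) ⟂ᵢ[μ] Z) :
    X ⟂ᵢ[μ] fun ω ↦ (Y ω, Z ω) := by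
  have hYZ : Y ⟂ᵢ[μ] Z := hXYZ.comp measurable_snd measurable_id
  rw [indepFun_iff_map_prod_eq_prod_map_map hX.aemeasurable (hY.prodMk hZ).aemeasurable,
    hYZ.map_prod_eq_prod_map_map hY.aemeasurable hZ.aemeasurable, ← Measure.prodAssoc_prod,
    ← hXY.map_prod_eq_prod_map_map hX.aemeasurable hY.aemeasurable,
    ← hXYZ.map_prod_eq_prod_map_map (hX.prodMk hY).aemeasurable hZ.aemeasurable,
    Measure.map_map MeasurableEquiv.prodAssoc.measurable ((hX.prodMk hY).prodMk hZ)]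
  rfl

end ProbabilityTheory

section Expectation

variable {Ω : Type*} {mΩ : MeasurableSpace Ω} {μ : Measure Ω}

lemma ProbabilityTheory.iIndepFun.indepFun_of_measurable_past [IsProbabilityMeasure μ]
    {β γ ι : Type*} [MeasurableSpace β] [MeasurableSpace γ] [MeasurableSpace ι]
    {ε : ℕ → Ω → β} {U : ℕ → Ω → γ} (hεindep : iIndepFun ε μ) (hε : ∀ t, Measurable (ε t))
    (hU : ∀ t, Measurable (U t)) (hUindep : (fun ω t => ε t ω) ⟂ᵢ[μ] fun ω t => U t ω)
    {t : ℕ} {f : Ω → ι}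
    (hf : Measurable[MeasurableSpace.comap (fun ω => ((fun τ : Fin t => ε τ ω), U t ω))
      inferInstance] f) :
    ε t ⟂ᵢ[μ] f := by
  have hpast : Measurable fun ω (τ : Fin t) => ε τ ω := measurable_pi_lambda _ fun τ => hε τ
  have hcur : ε t ⟂ᵢ[μ] fun ω (τ : Fin t) => ε τ ω := by
    have h := (hεindep.indepFun_finset {t} (range t) (by simp) hε).comp (_mγ := inferInstance)
      (_mγ' := inferInstance) (φ := fun v => v ⟨t, mem_singleton_self t⟩)
      (ψ := fun v (τ : Fin t) => v ⟨τ, mem_range.2 τ.2⟩) (measurable_pi_apply _)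
      (measurable_pi_lambda _ fun τ => measurable_pi_apply _)
    exact h
  have htie : (fun ω => (ε t ω, fun τ : Fin t => ε τ ω)) ⟂ᵢ[μ] U t :=
    hUindep.comp (φ := fun v => (v t, fun τ : Fin t => v τ)) (ψ := fun v => v t)
      (by fun_prop) (by fun_prop)
  exact indep_of_indep_of_le_right (hcur.prodMk_right_of_prodMk (hε t) hpast (hU t) htie)
    hf.comap_le

lemma integral_sum_mul_eq_mul_integral_sum {X Y : ℕ → Ω → ℝ} {a : ℝ}
    (hXY : ∀ t, X t ⟂ᵢ[μ] Y t) (hX : ∀ t, Integrable (X t) μ) (hY : ∀ t, Integrable (Y t) μ)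
    (hXa : ∀ t, ∫ ω, X t ω ∂μ = a) (T : ℕ) :
    ∫ ω, ∑ t ∈ range T, X t ω * Y t ω ∂μ = a * ∫ ω, ∑ t ∈ range T, Y t ω ∂μ := by
  have hXYint t : Integrable (fun ω => X t ω * Y t ω) μ := (hXY t).integrable_mul (hX t) (hY t)
  rw [integral_finsetSum _ fun t _ => hXYint t,
    integral_finsetSum _ fun t _ => hY t, mul_sum]
  refine sum_congr rfl fun t _ => ?_
  rw [← hXa t]
  exact (hXY t).integral_mul_eq_mul_integral (hX t).1 (hY t).1

lemma ite_eq_indicator_setOf (p : Ω → Prop) [DecidablePred p] (x : ℝ) :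
    (fun ω => if p ω then x else 0) = {ω | p ω}.indicator fun _ => x := by
  ext ω; simp [Set.indicator_apply]

lemma integrable_ite_const [IsFiniteMeasure μ] {p : Ω → Prop} [DecidablePred p]
    (hp : MeasurableSet {ω | p ω}) (x : ℝ) : Integrable (fun ω => if p ω then x else 0) μ := by
  rw [ite_eq_indicator_setOf]
  exact (integrable_const x).indicator hp

lemma integral_ite_const {p : Ω → Prop} [DecidablePred p] (hp : MeasurableSet {ω | p ω}) (x : ℝ) :
    ∫ ω, (if p ω then x else 0) ∂μ = (μ {ω | p ω}).toReal * x := by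
  rw [ite_eq_indicator_setOf, integral_indicator_const _ hp]
  rfl

end Expectation

section Rademacher

variable {Ω : Type*} {mΩ : MeasurableSpace Ω} {μ : Measure Ω} {ε : Ω → ℝ} {α : ℝ}

lemma ae_eq_one_or_eq_neg_one [IsProbabilityMeasure μ] (hε : Measurable ε) (hα0 : 0 ≤ α)
    (hα1 : α ≤ 1) (h1 : μ {ω | ε ω = 1} = ENNReal.ofReal α)
    (h2 : μ {ω | ε ω = -1} = ENNReal.ofReal (1 - α)) :
    ∀ᵐ ω ∂μ, ε ω = 1 ∨ ε ω = -1 := by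
  have hdisj : Disjoint {ω | ε ω = 1} {ω | ε ω = -1} :=
    Set.disjoint_left.2 fun ω (hp : ε ω = 1) (hm : ε ω = -1) => by norm_num [hp] at hm
  have hmeas : MeasurableSet {ω | ε ω = -1} := hε (measurableSet_singleton (-1))
  refine (ae_iff_measure_eq (p := fun ω => ε ω = 1 ∨ ε ω = -1) ?_).2 ?_
  · exact ((hε (measurableSet_singleton 1)).union hmeas).nullMeasurableSet
  · rw [measure_univ, Set.ofPred_or, measure_union hdisj hmeas, h1, h2,
      ← ENNReal.ofReal_add hα0 (by linarith)]
    norm_num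

lemma integrable_of_ae_eq_one_or_eq_neg_one [IsFiniteMeasure μ] (hε : Measurable ε)
    (hpm : ∀ᵐ ω ∂μ, ε ω = 1 ∨ ε ω = -1) : Integrable ε μ :=
  Integrable.of_bound hε.aestronglyMeasurable 1 <| by
    filter_upwards [hpm] with ω hω
    rcases hω with hω | hω <;> norm_num [hω]

lemma integral_one_add_eq_two_mul (hε : Measurable ε) (hα0 : 0 ≤ α)
    (hpm : ∀ᵐ ω ∂μ, ε ω = 1 ∨ ε ω = -1) (h1 : μ {ω | ε ω = 1} = ENNReal.ofReal α) :
    ∫ ω, (1 + ε ω) ∂μ = 2 * α := by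
  have h : (fun ω => 1 + ε ω) =ᵐ[μ] {ω | ε ω = 1}.indicator fun _ => 2 := by
    filter_upwards [hpm] with ω hω
    rcases hω with hω | hω <;> norm_num [Set.indicator, hω]
  have hmeas : MeasurableSet {ω | ε ω = 1} := hε (measurableSet_singleton 1)
  rw [integral_congr_ae h, integral_indicator_const _ hmeas,
    measureReal_def, h1, ENNReal.toReal_ofReal hα0, smul_eq_mul, mul_comm]

end Rademacher

lemma sum_sum_le_card_sq_mul_iSup_iSup {ι : Type*} [Fintype ι] (f : ι → ι → ℝ) :
    ∑ i, ∑ j, f i j ≤ (Fintype.card ι : ℝ) ^ 2 * ⨆ i, ⨆ j, f i j := by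
  calc ∑ i, ∑ j, f i j ≤ ∑ _i : ι, ∑ _j : ι, ⨆ i, ⨆ j, f i j :=
        sum_le_sum fun i _ => sum_le_sum fun j _ =>
          (le_ciSup (Set.finite_range _).bddAbove j).trans
            (le_ciSup (Set.finite_range (fun i => ⨆ j, f i j)).bddAbove i)
    _ = _ := by simp [sq, mul_assoc]

namespace FictitiousPlay

variable {ι : Type*} (c : ℕ → ℝ) (g : ℕ → ι → ℝ)

def IsLeader (t : ℕ) (i : ι) : Prop :=
  ∀ j, ∑ τ ∈ range t, c τ * g τ j ≤ ∑ τ ∈ range t, c τ * g τ i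

def IsSwitch (i j : ι) (t : ℕ) : Prop :=
  0 ≤ ∑ τ ∈ range t, c τ * (g τ i - g τ j) ∧ ∑ τ ∈ range (t + 1), c τ * (g τ i - g τ j) ≤ 0

open scoped Classical in
noncomputable def switchCost [Fintype ι] (C : ℝ) (T : ℕ) : ℝ :=
  ∑ t ∈ range T, ∑ a, ∑ b, if IsSwitch c g a b t then C * |g t a - g t b| else 0

variable {c g}

lemma be_the_leader {k : ℕ → ι} (hk : ∀ t, IsLeader c g t (k t)) (n : ℕ) (j : ι) :
    ∑ t ∈ range n, c t * g t j ≤ ∑ t ∈ range n, c t * g t (k (t + 1)) := by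
  induction n generalizing j with
  | zero => simp
  | succ n ih =>
    calc ∑ t ∈ range (n + 1), c t * g t j ≤ ∑ t ∈ range (n + 1), c t * g t (k (n + 1)) :=
          hk (n + 1) j
      _ ≤ ∑ t ∈ range (n + 1), c t * g t (k (t + 1)) := by
          rw [sum_range_succ, sum_range_succ]
          exact add_le_add_left (ih _) _

lemma isSwitch_of_isLeader {i j : ι} {t : ℕ} (hi : IsLeader c g t i)
    (hj : IsLeader c g (t + 1) j) : IsSwitch c g i j t := by
  simp only [IsSwitch, mul_sub, sum_sub_distrib, sub_nonneg, sub_nonpos]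
  exact ⟨hi j, hj i⟩

open scoped Classical in
lemma mul_sub_le_sum_switch [Fintype ι] {C : ℝ} {i j : ι} {t : ℕ} (hc : c t ∈ Set.Icc 0 C)
    (hi : IsLeader c g t i) (hj : IsLeader c g (t + 1) j) :
    c t * (g t j - g t i) ≤ ∑ a, ∑ b, if IsSwitch c g a b t then C * |g t a - g t b| else 0 := by
  have hnonneg : ∀ a b, 0 ≤ if IsSwitch c g a b t then C * |g t a - g t b| else 0 := fun a b => by
    split_ifs
    · exact mul_nonneg (hc.1.trans hc.2) (abs_nonneg _)
    · exact le_rfl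
  calc c t * (g t j - g t i) ≤ C * |g t i - g t j| := by
        rw [abs_sub_comm]
        exact (mul_le_mul_of_nonneg_left (le_abs_self _) hc.1).trans
          (mul_le_mul_of_nonneg_right hc.2 (abs_nonneg _))
    _ = if IsSwitch c g i j t then C * |g t i - g t j| else 0 :=
        (if_pos (isSwitch_of_isLeader hi hj)).symm
    _ ≤ ∑ b, if IsSwitch c g i b t then C * |g t i - g t b| else 0 :=
        single_le_sum (fun b _ => hnonneg i b) (mem_univ j)
    _ ≤ _ := single_le_sum
        (f := fun a => ∑ b, if IsSwitch c g a b t then C * |g t a - g t b| else 0)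
        (fun a _ => sum_nonneg fun b _ => hnonneg a b) (mem_univ i)

theorem sum_mul_sub_le_switchCost [Fintype ι] {C : ℝ} (hc : ∀ t, c t ∈ Set.Icc 0 C) {k : ℕ → ι}
    (hk : ∀ t, IsLeader c g t (k t)) (T : ℕ) (j : ι) :
    ∑ t ∈ range T, c t * (g t j - g t (k t)) ≤ switchCost c g C T :=
  calc ∑ t ∈ range T, c t * (g t j - g t (k t))
      = (∑ t ∈ range T, c t * g t j - ∑ t ∈ range T, c t * g t (k (t + 1))) +
          ∑ t ∈ range T, c t * (g t (k (t + 1)) - g t (k t)) := by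
        simp only [mul_sub, sum_sub_distrib]; ring
    _ ≤ 0 + switchCost c g C T :=
        add_le_add (sub_nonpos.2 (be_the_leader hk T j))
          (sum_le_sum fun t _ => mul_sub_le_sum_switch (hc t) (hk t) (hk (t + 1)))
    _ = _ := zero_add _

section RandomWeights

variable {Ω : Type*} {mΩ : MeasurableSpace Ω} {μ : Measure Ω} [IsFiniteMeasure μ]
  {W : Ω → ℕ → ℝ}

lemma measurableSet_isSwitch (hW : ∀ τ, Measurable fun ω => W ω τ) (g : ℕ → ι → ℝ) (a b : ι)
    (t : ℕ) : MeasurableSet {ω | IsSwitch (W ω) g a b t} := by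
  have hsum : ∀ n, Measurable fun ω => ∑ τ ∈ range n, W ω τ * (g τ a - g τ b) := fun n =>
    Finset.measurable_sum _ fun τ _ => (hW τ).mul_const _
  exact (measurableSet_le measurable_const (hsum t)).inter
    (measurableSet_le (hsum (t + 1)) measurable_const)

variable [Fintype ι]

open scoped Classical in
lemma integrable_switchCost (hW : ∀ τ, Measurable fun ω => W ω τ) (g : ℕ → ι → ℝ) (C : ℝ)
    (T : ℕ) : Integrable (fun ω => switchCost (W ω) g C T) μ :=
  integrable_finsetSum _ fun t _ => integrable_finsetSum _ fun a _ =>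
    integrable_finsetSum _ fun b _ => integrable_ite_const (measurableSet_isSwitch hW g a b t) _

open scoped Classical in
lemma integral_switchCost (hW : ∀ τ, Measurable fun ω => W ω τ) (g : ℕ → ι → ℝ) (C : ℝ)
    (T : ℕ) : ∫ ω, switchCost (W ω) g C T ∂μ =
      C * ∑ a, ∑ b, ∑ t ∈ range T, |g t a - g t b| * (μ {ω | IsSwitch (W ω) g a b t}).toReal := by
  have hint t a b := integrable_ite_const (μ := μ) (measurableSet_isSwitch hW g a b t)
    (C * |g t a - g t b|)
  calc ∫ ω, switchCost (W ω) g C T ∂μ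
      = ∑ t ∈ range T, ∑ a, ∑ b,
          (μ {ω | IsSwitch (W ω) g a b t}).toReal * (C * |g t a - g t b|) := by
        simp only [switchCost]
        rw [integral_finsetSum _ fun t _ => integrable_finsetSum _ fun a _ =>
          integrable_finsetSum _ fun b _ => hint t a b]
        refine sum_congr rfl fun t _ => ?_
        rw [integral_finsetSum _ fun a _ => integrable_finsetSum _ fun b _ => hint t a b]
        refine sum_congr rfl fun a _ => ?_
        rw [integral_finsetSum _ fun b _ => hint t a b]
        exact sum_congr rfl fun b _ => integral_ite_const (measurableSet_isSwitch hW g a b t) _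
    _ = _ := by
        rw [sum_comm, mul_sum]
        refine sum_congr rfl fun a _ => ?_
        rw [sum_comm, mul_sum]
        refine sum_congr rfl fun b _ => ?_
        rw [mul_sum]
        exact sum_congr rfl fun t _ => by ring

end RandomWeights

end FictitiousPlay

open FictitiousPlay in
theorem expected_regret_le_switching_general
    {Ω : Type*} [MeasurableSpace Ω] (μ : Measure Ω) [IsProbabilityMeasure μ]
    {γ : Type*} [MeasurableSpace γ]
    (N T : ℕ)
    (α : ℝ) (hα : α ∈ Set.Ioo (0 : ℝ) 1)
    (g : ℕ → Fin N → ℝ)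
    (ε : ℕ → Ω → ℝ) (U : ℕ → Ω → γ)
    (hεmeas : ∀ t, Measurable (ε t)) (hUmeas : ∀ t, Measurable (U t))
    (hεdist : ∀ t, μ {ω | ε t ω = 1} = ENNReal.ofReal α ∧
                   μ {ω | ε t ω = -1} = ENNReal.ofReal (1 - α))
    (hεindep : iIndepFun ε μ)
    (hUindep : IndepFun (fun ω (t : ℕ) => ε t ω) (fun ω (t : ℕ) => U t ω) μ)
    (k : ℕ → Ω → Fin N)
    (hkmeas : ∀ t, Measurable[MeasurableSpace.comap
        (fun ω => ((fun τ : Fin t => ε τ ω), U t ω)) inferInstance] (k t))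
    (hkargmax : ∀ t, ∀ᵐ ω ∂μ, ∀ j : Fin N,
        ∑ τ ∈ Finset.range t, (1 + ε τ ω) * g τ j
          ≤ ∑ τ ∈ Finset.range t, (1 + ε τ ω) * g τ (k t ω)) :
    ∫ ω, ((⨆ j : Fin N, ∑ t ∈ Finset.range T, g t j)
            - ∑ t ∈ Finset.range T, g t (k t ω)) ∂μ
      ≤ ((N : ℝ) ^ 2 / α) * ⨆ i : Fin N, ⨆ j : Fin N,
          ∑ t ∈ Finset.range T, |g t i - g t j| *
            (μ {ω | (0 ≤ ∑ τ ∈ Finset.range t, (1 + ε τ ω) * (g τ i - g τ j)) ∧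
                    (∑ τ ∈ Finset.range (t + 1), (1 + ε τ ω) * (g τ i - g τ j) ≤ 0)}).toReal := by
  obtain ⟨hα0, hα1⟩ := hα
  have : Nonempty (Fin N) := ⟨k 0 (nonempty_of_isProbabilityMeasure μ).some⟩
  obtain ⟨j, hj⟩ := exists_eq_ciSup_of_finite (f := fun j : Fin N => ∑ t ∈ range T, g t j)
  have hpm t := ae_eq_one_or_eq_neg_one (hεmeas t) hα0.le hα1.le (hεdist t).1 (hεdist t).2
  have hkm t : Measurable (k t) := (hkmeas t).mono (Measurable.comap_le (by fun_prop)) le_rfl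
  have hX t : Integrable (fun ω => 1 + ε t ω) μ :=
    (integrable_const 1).add (integrable_of_ae_eq_one_or_eq_neg_one (hεmeas t) (hpm t))
  have hY t : Integrable (fun ω => g t j - g t (k t ω)) μ :=
    (integrable_const _).sub (Integrable.of_finite.comp_measurable (hkm t))
  have hXY t : (fun ω => 1 + ε t ω) ⟂ᵢ[μ] fun ω => g t j - g t (k t ω) :=
    (hεindep.indepFun_of_measurable_past hεmeas hUmeas hUindep (hkmeas t)).comp
      (φ := fun x => 1 + x) (ψ := fun i => g t j - g t i) (by fun_prop) .of_discrete
  have hpath : ∀ᵐ ω ∂μ, ∑ t ∈ range T, (1 + ε t ω) * (g t j - g t (k t ω))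
      ≤ switchCost (fun τ => 1 + ε τ ω) g 2 T := by
    filter_upwards [ae_all_iff.2 hpm, ae_all_iff.2 hkargmax] with ω hω hlead
    refine sum_mul_sub_le_switchCost (fun t => ?_) hlead T j
    rcases hω t with h | h <;> norm_num [h]
  have hmono := integral_mono_ae
    (integrable_finsetSum (f := fun t ω => (1 + ε t ω) * (g t j - g t (k t ω))) _
      fun t _ => (hXY t).integrable_mul (hX t) (hY t))
    (integrable_switchCost (fun τ => by fun_prop) g 2 T) hpath
  rw [integral_sum_mul_eq_mul_integral_sum hXY hX hY
      (fun t => integral_one_add_eq_two_mul (hεmeas t) hα0.le (hpm t) (hεdist t).1),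
    integral_switchCost (fun τ => by fun_prop)] at hmono
  have hsup := sum_sum_le_card_sq_mul_iSup_iSup fun a b => ∑ t ∈ range T,
    |g t a - g t b| * (μ {ω | IsSwitch (fun τ => 1 + ε τ ω) g a b t}).toReal
  simp only [Fintype.card_fin, IsSwitch, sum_sub_distrib] at hsup hmono
  rw [← hj, div_mul_eq_mul_div, le_div_iff₀ hα0]
  linarith

/-- **regret-to-switching-probabilities bound.** Single-stream sampled
fictitious play with sampling probability `α` against an oblivious opponent with payoff
vectors `g_1,…,g_T ∈ [−1,1]^N`. The sampling variables `ε_t` are i.i.d. with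
`P(ε_t = 1) = α`, `P(ε_t = −1) = 1−α`; the tie-breaking variables `U_t` (with values in an
arbitrary measurable space `γ`) are jointly independent of the process `(ε_t)`. The move
`k_t` is measurable w.r.t. `σ(ε_1,…,ε_{t−1}, U_t)` and is almost surely an argmax of
`j ↦ ∑_{τ<t} (1+ε_τ) g_{τ,j}` (time is 0-indexed). Then the expected regret is at most
`(N²/α) · max_{i,j} ∑_{t=1}^T |g_{t,i} − g_{t,j}| · P(switch of i over j at time t)`. -/
theorem expected_regret_le_switching
    {Ω : Type*} [MeasurableSpace Ω] (μ : Measure Ω) [IsProbabilityMeasure μ]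
    {γ : Type*} [MeasurableSpace γ]
    (N T : ℕ) (hN : 1 ≤ N) (hT : 1 ≤ T)
    (α : ℝ) (hα : α ∈ Set.Ioo (0 : ℝ) 1)
    (g : ℕ → Fin N → ℝ) (hg : ∀ t j, g t j ∈ Set.Icc (-1 : ℝ) 1)
    (ε : ℕ → Ω → ℝ) (U : ℕ → Ω → γ)
    (hεmeas : ∀ t, Measurable (ε t)) (hUmeas : ∀ t, Measurable (U t))
    (hεdist : ∀ t, μ {ω | ε t ω = 1} = ENNReal.ofReal α ∧
                   μ {ω | ε t ω = -1} = ENNReal.ofReal (1 - α))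
    (hεindep : iIndepFun ε μ)
    (hUindep : IndepFun (fun ω (t : ℕ) => ε t ω) (fun ω (t : ℕ) => U t ω) μ)
    (k : ℕ → Ω → Fin N)
    (hkmeas : ∀ t, Measurable[MeasurableSpace.comap
        (fun ω => ((fun τ : Fin t => ε τ ω), U t ω)) inferInstance] (k t))
    (hkargmax : ∀ t, ∀ᵐ ω ∂μ, ∀ j : Fin N,
        ∑ τ ∈ Finset.range t, (1 + ε τ ω) * g τ j
          ≤ ∑ τ ∈ Finset.range t, (1 + ε τ ω) * g τ (k t ω)) :
    ∫ ω, ((⨆ j : Fin N, ∑ t ∈ Finset.range T, g t j)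
            - ∑ t ∈ Finset.range T, g t (k t ω)) ∂μ
      ≤ ((N : ℝ) ^ 2 / α) * ⨆ i : Fin N, ⨆ j : Fin N,
          ∑ t ∈ Finset.range T, |g t i - g t j| *
            (μ {ω | (0 ≤ ∑ τ ∈ Finset.range t, (1 + ε τ ω) * (g τ i - g τ j)) ∧
                    (∑ τ ∈ Finset.range (t + 1), (1 + ε τ ω) * (g τ i - g τ j) ≤ 0)}).toReal :=
  expected_regret_le_switching_general μ N T α hα g ε U hεmeas hUmeas hεdist hεindep hUindep k
    hkmeas hkargmax
end

section
/- (Littlewood–Offord theorem of Erdős.) Let x_1, …, x_n be real numbers with |x_i| ≥ 1 for all i, and let ε_1, …, ε_n be i.i.d. Rademacher random variables. Then for every Δ > 0 and every closed interval B of radius Δ (i.e., of length 2Δ), P(ε_1 x_1 + ⋯ + ε_n x_n ∈ B) ≤ (⌊Δ⌋ + 1) · S(n) / 2^n, where S(n) is the largest binomial coefficient C(n, ⌊n/2⌋) and ⌊·⌋ denotes the integer part. -/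
/-!
Almost surely every `ε i` is `±1`; then, with `S = {i | 0 < ε i * x i}`, the sum equals
`2 * ∑_{i ∈ S} |x i| - ∑_i |x i|`, and each sign pattern has probability `2⁻ⁿ`. So it suffices to
count the sets `S` whose weight `∑_{i ∈ S} |x i|` lies in a fixed interval `[a, a + Δ]`. Sorting
them by `⌊weight - a⌋` gives `⌊Δ⌋ + 1` classes, each an antichain because enlarging `S` adds at
least `1` to its weight, and Sperner's theorem bounds each class by `C(n, ⌊n/2⌋)`.
-/

open MeasureTheory ProbabilityTheory Finset

section Counting

variable {α : Type*} [DecidableEq α] {w : α → ℝ}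

lemma sum_add_one_le_sum_of_ssubset (hw : ∀ i, 1 ≤ w i) {S T : Finset α} (h : S ⊂ T) :
    ∑ i ∈ S, w i + 1 ≤ ∑ i ∈ T, w i := by
  obtain ⟨i, hiT, hiS⟩ := exists_of_ssubset h
  rw [← sum_sdiff h.subset, add_comm]
  gcongr
  exact (hw i).trans <|
    single_le_sum (fun j _ ↦ zero_le_one.trans (hw j)) (mem_sdiff.2 ⟨hiT, hiS⟩)

lemma isAntichain_floor_sum_sub_eq (hw : ∀ i, 1 ≤ w i) (a : ℝ) (k : ℕ) :
    IsAntichain (· ⊆ ·) {S : Finset α | a ≤ ∑ i ∈ S, w i ∧ ⌊∑ i ∈ S, w i - a⌋₊ = k} := by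
  rintro S ⟨haS, hS⟩ T ⟨-, hT⟩ hne hST
  have hlt := sum_add_one_le_sum_of_ssubset hw (ssubset_of_subset_of_ne hST hne)
  have : ⌊∑ i ∈ S, w i - a⌋₊ + 1 ≤ ⌊∑ i ∈ T, w i - a⌋₊ := by
    rw [← Nat.floor_add_one (sub_nonneg.2 haS)]
    exact Nat.floor_le_floor (by linarith)
  omega

theorem card_filter_sum_mem_Icc_le [Fintype α] (hw : ∀ i, 1 ≤ w i) (a b : ℝ) :
    #{S : Finset α | ∑ i ∈ S, w i ∈ Set.Icc a b}
      ≤ (⌊b - a⌋₊ + 1) * (Fintype.card α).choose (Fintype.card α / 2) := by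
  rw [mul_comm, ← card_range (⌊b - a⌋₊ + 1)]
  refine card_le_mul_card_image_of_maps_to (f := fun S ↦ ⌊∑ i ∈ S, w i - a⌋₊) ?_ _ ?_
  · intro S hS
    simp only [mem_filter, mem_univ, true_and, Set.mem_Icc] at hS
    exact mem_range.2 (Nat.lt_succ_of_le (Nat.floor_le_floor (by linarith)))
  · intro k _
    refine IsAntichain.sperner ((isAntichain_floor_sum_sub_eq hw a k).subset ?_)
    intro S hS
    simp only [coe_filter, mem_filter, mem_univ, true_and, Set.mem_Icc] at hS
    exact ⟨hS.1.1, hS.2⟩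

end Counting

lemma sum_ite_mem_neg {ι : Type*} [Fintype ι] [DecidableEq ι] (S : Finset ι) (w : ι → ℝ) :
    ∑ i, (if i ∈ S then w i else -w i) = 2 * ∑ i ∈ S, w i - ∑ i, w i := by
  rw [← sum_add_sum_compl S w, ← sum_add_sum_compl S (fun i ↦ if i ∈ S then w i else -w i),
    sum_congr rfl fun i hi ↦ if_pos hi, sum_congr rfl fun i hi ↦ if_neg (mem_compl.1 hi),
    sum_neg_distrib]
  ring

lemma eq_ite_pos_abs (y : ℝ) : y = if 0 < y then |y| else -|y| := by
  split_ifs with h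
  · exact (abs_of_pos h).symm
  · rw [abs_of_nonpos (not_lt.1 h), neg_neg]

section Rademacher

variable {Ω ι : Type*} [MeasurableSpace Ω] {μ : Measure Ω}

lemma ae_eq_one_or_eq_neg_one_s2 [IsProbabilityMeasure μ] {X : Ω → ℝ} (hX : Measurable X)
    (h : μ {ω | X ω = 1} = 1 / 2 ∧ μ {ω | X ω = -1} = 1 / 2) :
    ∀ᵐ ω ∂μ, X ω = 1 ∨ X ω = -1 := by
  have h1 : MeasurableSet {ω | X ω = 1} := hX (measurableSet_singleton _)
  have h2 : MeasurableSet {ω | X ω = -1} := hX (measurableSet_singleton _)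
  have hdisj : Disjoint {ω | X ω = 1} {ω | X ω = -1} := by
    refine Set.disjoint_left.2 fun ω (h1 : X ω = 1) (h2 : X ω = -1) ↦ ?_
    norm_num [h1] at h2
  refine (ae_mem_iff_measure_eq (h1.union h2).nullMeasurableSet).2 ?_
  rw [measure_univ, measure_union hdisj h2, h.1, h.2, ENNReal.add_halves]

variable [Fintype ι] {ε : ι → Ω → ℝ}

lemma measure_forall_eq_of_rademacher (hIndep : iIndepFun ε μ)
    (hRad : ∀ i, μ {ω | ε i ω = 1} = 1 / 2 ∧ μ {ω | ε i ω = -1} = 1 / 2)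
    {s : ι → ℝ} (hs : ∀ i, s i = 1 ∨ s i = -1) :
    μ {ω | ∀ i, ε i ω = s i} = (1 / 2) ^ Fintype.card ι := by
  have hiInter : {ω | ∀ i, ε i ω = s i} = ⋂ i, ε i ⁻¹' {s i} := by ext; simp
  rw [hiInter, hIndep.meas_iInter fun i ↦ ⟨{s i}, measurableSet_singleton _, rfl⟩,
    ← card_univ, ← prod_const]
  refine prod_congr rfl fun i _ ↦ ?_
  rcases hs i with h | h <;> simp [Set.preimage, h, hRad i]

open scoped Classical in
theorem measure_sum_mul_mem_le [IsProbabilityMeasure μ]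
    (hmeas : ∀ i, Measurable (ε i)) (hIndep : iIndepFun ε μ)
    (hRad : ∀ i, μ {ω | ε i ω = 1} = 1 / 2 ∧ μ {ω | ε i ω = -1} = 1 / 2)
    {x : ι → ℝ} (hx : ∀ i, x i ≠ 0) (E : Set ℝ) :
    μ {ω | ∑ i, ε i ω * x i ∈ E}
      ≤ #{S : Finset ι | 2 * ∑ i ∈ S, |x i| - ∑ i, |x i| ∈ E} * (1 / 2) ^ Fintype.card ι := by
  set 𝒜 : Finset (Finset ι) := {S | 2 * ∑ i ∈ S, |x i| - ∑ i, |x i| ∈ E}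
  set A : Finset ι → Set Ω := fun S ↦ {ω | ∀ i, ε i ω * x i = if i ∈ S then |x i| else -|x i|}
  have hA : ∀ S, μ (A S) = (1 / 2) ^ Fintype.card ι := by
    intro S
    convert measure_forall_eq_of_rademacher hIndep hRad
      (s := fun i ↦ (if i ∈ S then |x i| else -|x i|) / x i) ?_ using 4
    · simp only [eq_div_iff (hx _)]
    · intro i
      rcases abs_choice (x i) with h | h <;> split_ifs <;> simp [h, hx i]
  have hcover : {ω | ∑ i, ε i ω * x i ∈ E} ≤ᵐ[μ] ⋃ S ∈ 𝒜, A S := by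
    filter_upwards [ae_all_iff.2 fun i ↦ ae_eq_one_or_eq_neg_one_s2 (hmeas i) (hRad i)] with ω hω hE
    set S : Finset ι := {i | 0 < ε i ω * x i}
    have hS : ω ∈ A S := by
      intro i
      have habs : |ε i ω * x i| = |x i| := by rcases hω i with h | h <;> simp [h]
      simpa [S, habs] using eq_ite_pos_abs (ε i ω * x i)
    have hsum : ∑ i, ε i ω * x i = 2 * ∑ i ∈ S, |x i| - ∑ i, |x i| := by
      rw [sum_congr rfl fun i _ ↦ hS i, sum_ite_mem_neg]
    exact Set.mem_biUnion (mem_filter.2 ⟨mem_univ S, hsum ▸ hE⟩) hS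
  calc μ {ω | ∑ i, ε i ω * x i ∈ E} ≤ μ (⋃ S ∈ 𝒜, A S) := measure_mono_ae hcover
    _ ≤ ∑ S ∈ 𝒜, μ (A S) := measure_biUnion_finset_le _ _
    _ = #𝒜 * (1 / 2) ^ Fintype.card ι := by simp [hA]

end Rademacher

/-- **Littlewood–Offord theorem of Erdős.** If `|x i| ≥ 1` for all `i` and
`ε_1,…,ε_n` are i.i.d. Rademacher random variables, then for every `Δ > 0` and every closed
interval of radius `Δ` (written `[c−Δ, c+Δ]`),
`P(∑ ε_i x_i ∈ [c−Δ, c+Δ]) ≤ (⌊Δ⌋+1) · C(n, ⌊n/2⌋) / 2^n`. -/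
theorem littlewood_offord_erdos
    {Ω : Type*} [MeasurableSpace Ω] (μ : Measure Ω) [IsProbabilityMeasure μ]
    (n : ℕ) (x : Fin n → ℝ) (hx : ∀ i, 1 ≤ |x i|)
    (ε : Fin n → Ω → ℝ) (hmeas : ∀ i, Measurable (ε i))
    (hIndep : iIndepFun ε μ)
    (hRad : ∀ i, μ {ω | ε i ω = 1} = 1 / 2 ∧ μ {ω | ε i ω = -1} = 1 / 2)
    (Δ : ℝ) (hΔ : 0 < Δ) (c : ℝ) :
    (μ {ω | ∑ i, ε i ω * x i ∈ Set.Icc (c - Δ) (c + Δ)}).toReal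
      ≤ ((⌊Δ⌋ : ℝ) + 1) * (n.choose (n / 2) : ℝ) / 2 ^ n := by
  classical
  have hx0 : ∀ i, x i ≠ 0 := fun i ↦ abs_pos.1 (one_pos.trans_le (hx i))
  set W := ∑ i, |x i|
  set 𝒜 : Finset (Finset (Fin n)) := {S | 2 * ∑ i ∈ S, |x i| - W ∈ Set.Icc (c - Δ) (c + Δ)}
  have hcard : #𝒜 ≤ (⌊Δ⌋₊ + 1) * n.choose (n / 2) := by
    have h := card_filter_sum_mem_Icc_le hx ((c - Δ + W) / 2) ((c + Δ + W) / 2)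
    rw [Fintype.card_fin, show (c + Δ + W) / 2 - (c - Δ + W) / 2 = Δ by ring] at h
    convert h using 3 with S
    simp only [Set.mem_Icc]
    constructor <;> rintro ⟨h₁, h₂⟩ <;> constructor <;> linarith
  calc (μ {ω | ∑ i, ε i ω * x i ∈ Set.Icc (c - Δ) (c + Δ)}).toReal
      ≤ (#𝒜 * (1 / 2) ^ n : ENNReal).toReal := by
        refine ENNReal.toReal_mono (by finiteness) ?_
        convert measure_sum_mul_mem_le hmeas hIndep hRad hx0 (Set.Icc (c - Δ) (c + Δ))
        exact (Fintype.card_fin n).symm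
    _ = #𝒜 / 2 ^ n := by simp [div_eq_mul_inv]
    _ ≤ ((⌊Δ⌋₊ + 1) * n.choose (n / 2) : ℕ) / 2 ^ n := by gcongr
    _ = ((⌊Δ⌋ : ℝ) + 1) * (n.choose (n / 2) : ℝ) / 2 ^ n := by
        push_cast
        rw [natCast_floor_eq_intCast_floor hΔ.le]
end

section
/- Let α ∈ (0,1) and let t > 0 be real. Then for every real x with 0 < x < t, α^x · (1−α)^{t−x} / (x^x · (t−x)^{t−x}) ≤ t^{−t}; that is, the function f(x) = α^x (1−α)^{t−x} x^{−x} (t−x)^{−(t−x)} attains its maximum value t^{−t} at x = αt. -/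
/-! Weighted AM–GM with weights `x / (x + y)`, `y / (x + y)` applied to `a / x` and `b / y` gives
`(a / x) ^ x * (b / y) ^ y ≤ ((a + b) / (x + y)) ^ (x + y)`, with equality when `a / x = b / y`.
For `a = α`, `b = 1 - α`, `y = t - x` the right-hand side is `t ^ (-t)`, and `x = α t` is the
equality case. -/

namespace Real

lemma div_rpow_mul_div_rpow {a b x y : ℝ} (ha : 0 ≤ a) (hb : 0 ≤ b) (hx : 0 ≤ x) (hy : 0 ≤ y) :
    (a / x) ^ x * (b / y) ^ y = a ^ x * b ^ y / (x ^ x * y ^ y) := by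
  rw [div_rpow ha hx, div_rpow hb hy, div_mul_div_comm]

lemma div_rpow_mul_div_rpow_le {a b x y : ℝ} (ha : 0 ≤ a) (hb : 0 ≤ b) (hx : 0 < x) (hy : 0 < y) :
    (a / x) ^ x * (b / y) ^ y ≤ ((a + b) / (x + y)) ^ (x + y) := by
  have hs : 0 < x + y := add_pos hx hy
  have amgm : (a / x) ^ (x / (x + y)) * (b / y) ^ (y / (x + y)) ≤ (a + b) / (x + y) := by
    convert geom_mean_le_arith_mean2_weighted (div_nonneg hx.le hs.le) (div_nonneg hy.le hs.le)
      (div_nonneg ha hx.le) (div_nonneg hb hy.le) (by field_simp) using 1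
    field_simp
  calc (a / x) ^ x * (b / y) ^ y
      = ((a / x) ^ (x / (x + y)) * (b / y) ^ (y / (x + y))) ^ (x + y) := by
        rw [mul_rpow (by positivity) (by positivity), ← rpow_mul (by positivity),
          ← rpow_mul (by positivity), div_mul_cancel₀ _ hs.ne', div_mul_cancel₀ _ hs.ne']
    _ ≤ ((a + b) / (x + y)) ^ (x + y) := by gcongr

end Real

/-- For `α ∈ (0,1)` and real `t > 0`, the function
`f(x) = α^x (1−α)^{t−x} x^{−x} (t−x)^{−(t−x)}` on `(0,t)` is bounded by `t^{−t}`,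
and attains this maximum value at `x = αt`. (All powers are real powers.) -/
theorem entropy_ratio_max
    (α t : ℝ) (hα : α ∈ Set.Ioo (0 : ℝ) 1) (ht : 0 < t) :
    (∀ x : ℝ, 0 < x → x < t →
        α ^ x * (1 - α) ^ (t - x) / (x ^ x * (t - x) ^ (t - x)) ≤ t ^ (-t)) ∧
      α ^ (α * t) * (1 - α) ^ (t - α * t)
          / ((α * t) ^ (α * t) * (t - α * t) ^ (t - α * t)) = t ^ (-t) := by
  obtain ⟨hα0, hα1⟩ := hα
  have h1α : 0 < 1 - α := sub_pos.mpr hα1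
  have h_max : t ^ (-t) = (1 / t) ^ t := by rw [one_div, Real.inv_rpow ht.le, Real.rpow_neg ht.le]
  refine ⟨fun x hx hxt => ?_, ?_⟩
  · have htx : 0 < t - x := sub_pos.mpr hxt
    have := Real.div_rpow_mul_div_rpow_le hα0.le h1α.le hx htx
    rwa [Real.div_rpow_mul_div_rpow hα0.le h1α.le hx.le htx.le,
      add_sub_cancel, add_sub_cancel, ← h_max] at this
  · have htαt : t - α * t = (1 - α) * t := by ring
    rw [htαt, ← Real.div_rpow_mul_div_rpow hα0.le h1α.le (by positivity) (by positivity),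
      div_mul_cancel_left₀ hα0.ne', div_mul_cancel_left₀ h1α.ne', ← Real.rpow_add (by positivity),
      ← add_mul, add_sub_cancel, one_mul, h_max, one_div]
end

section
/- In the setting below: Σ_{t=1}^T |d_t| · P( Σ_{τ=1}^{t−1} ε_τ d_τ ≥ −Σ_{τ=1}^{t−1} d_τ and Σ_{τ=1}^{t} ε_τ d_τ ≤ −Σ_{τ=1}^{t} d_τ ) ≤ 20 · C_LO · √( T · log₂(4 · log₂ T) ), where C_LO = 2√2·e/π. -/
/-!
On the event of round `t`, the walk `S_t = ∑_{τ<t} ε_τ d_τ` lies in the interval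
`[-∑_{τ<t} d_τ, -∑_{τ<t} d_τ + 2|d_t|]`, because `ε_t = ±1`. By Erdős' form of the
Littlewood–Offord inequality, a Rademacher sum lands in an interval of length `4r` with
probability at most `2/√(m+1)`, where `m` counts the weights larger than `r`: once the small
coordinates are fixed, the sign patterns landing in the interval form a family of sets in which
nested members differ in at most one element, so the family is the union of two antichains and
Sperner's theorem applies. Grouping the rounds by the dyadic scale `|d_t| ∈ (2^{-k}, 2^{1-k}]`,
the `j`-th round of scale `k` has probability at most `2/√(j+1)`, so scale `k` contributes at
most `2^{3-k}√T`. Summing over `k < T`, plus at most `2` from the rounds with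
`|d_t| ≤ 2^{1-T}`, gives `16√T + 2`, which is below the claimed bound.
-/

open MeasureTheory ProbabilityTheory Finset

lemma card_le_two_mul_choose_of_card_sdiff_le_one {α : Type*} [Fintype α] [DecidableEq α]
    {𝒜 : Finset (Finset α)} (h𝒜 : ∀ A ∈ 𝒜, ∀ B ∈ 𝒜, A ⊆ B → #(B \ A) ≤ 1) :
    #𝒜 ≤ 2 * (Fintype.card α).choose (Fintype.card α / 2) := by
  have hsucc : ∀ A ∈ 𝒜, ∀ B ∈ 𝒜, A ⊂ B → #B = #A + 1 := by
    intro A hA B hB hAB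
    have := card_sdiff_of_subset hAB.subset
    have := card_lt_card hAB
    have := h𝒜 A hA B hB hAB.subset
    omega
  -- comparable members differ in size by exactly one, so each parity class is an antichain
  have hac : ∀ (p : ℕ → Prop) [DecidablePred p], (∀ n, p n → ¬ p (n + 1)) →
      IsAntichain (· ⊆ ·) (SetLike.coe {A ∈ 𝒜 | p #A}) := by
    intro p _ hp A hA B hB hne hAB
    simp only [coe_filter, Set.mem_ofPred_eq] at hA hB
    exact hp _ hA.2 (hsucc A hA.1 B hB.1 (ssubset_of_subset_of_ne hAB hne) ▸ hB.2)
  have heven := (hac Even fun n hn h => Nat.even_add_one.1 h hn).sperner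
  have hodd := (hac (¬ Even ·) fun n hn h => h (Nat.even_add_one.2 hn)).sperner
  rw [← card_filter_add_card_filter_not (fun A => Even #A)]
  omega

lemma card_sdiff_le_one_of_sum_le {α : Type*} [DecidableEq α] {w : α → ℝ} {r : ℝ} {A B : Finset α}
    (hr : 0 ≤ r) (hw : ∀ i ∈ B \ A, r < w i) (hAB : A ⊆ B)
    (hsum : ∑ i ∈ B, w i ≤ ∑ i ∈ A, w i + 2 * r) : #(B \ A) ≤ 1 := by
  by_contra! hcard
  have hlt : ∑ _i ∈ B \ A, r < ∑ i ∈ B \ A, w i :=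
    sum_lt_sum_of_nonempty (card_pos.1 (by omega)) hw
  have h2 : (2 : ℝ) ≤ #(B \ A) := by exact_mod_cast hcard
  rw [sum_const, nsmul_eq_mul] at hlt
  rw [← sum_sdiff hAB] at hsum
  nlinarith

def signedSum {ι : Type*} [Fintype ι] (c : ι → ℝ) (σ : ι → Bool) : ℝ :=
  ∑ i, if σ i then c i else -c i

lemma signedSum_eq_two_mul_sum_sub {ι : Type*} [Fintype ι] (c : ι → ℝ) (σ : ι → Bool) :
    signedSum c σ = 2 * ∑ i with σ i = decide (0 < c i), |c i| - ∑ i, |c i| := by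
  rw [signedSum, sum_filter, mul_sum, ← sum_sub_distrib]
  refine sum_congr rfl fun i _ => ?_
  rcases lt_trichotomy (c i) 0 with h | h | h <;> cases σ i <;>
    simp [h, abs_of_neg, abs_of_pos, not_lt_of_gt] <;> ring

theorem card_signedSum_mem_Icc_le_of_forall_lt_abs {ι : Type*} [Fintype ι] [DecidableEq ι]
    {c : ι → ℝ} {r : ℝ} (hr : 0 ≤ r) (hc : ∀ i, r < |c i|) (x : ℝ) :
    #{σ | signedSum c σ ∈ Set.Icc x (x + 4 * r)} ≤
      2 * (Fintype.card ι).choose (Fintype.card ι / 2) := by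
  set positives : (ι → Bool) → Finset ι := fun σ => {i | σ i = decide (0 < c i)}
  have hinj : Function.Injective positives := by
    intro σ σ' h
    funext i
    have := congrArg (i ∈ ·) h
    simp only [positives, mem_filter, mem_univ, true_and, eq_iff_iff] at this
    revert this
    cases σ i <;> cases σ' i <;> cases decide (0 < c i) <;> simp
  rw [← card_image_of_injective _ hinj]
  refine card_le_two_mul_choose_of_card_sdiff_le_one ?_
  simp only [mem_image, mem_filter, mem_univ, true_and]
  rintro _ ⟨σ, ⟨hσ₁, hσ₂⟩, rfl⟩ _ ⟨σ', ⟨hσ'₁, hσ'₂⟩, rfl⟩ hsub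
  rw [signedSum_eq_two_mul_sum_sub] at hσ₁ hσ₂ hσ'₁ hσ'₂
  exact card_sdiff_le_one_of_sum_le hr (fun i _ => hc i) hsub (by linarith)

theorem card_signedSum_mem_Icc_le {ι : Type*} [Fintype ι] [DecidableEq ι] (c : ι → ℝ)
    {r : ℝ} (hr : 0 ≤ r) (B : Finset ι) (hB : ∀ i ∈ B, r < |c i|) (x : ℝ) :
    #{σ | signedSum c σ ∈ Set.Icc x (x + 4 * r)} ≤
      2 ^ (Fintype.card ι - #B) * (2 * (#B).choose (#B / 2)) := by
  set F : Finset (ι → Bool) := {σ | signedSum c σ ∈ Set.Icc x (x + 4 * r)}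
  let inner (σ : ι → Bool) : B → Bool := fun i => σ i
  let outer (σ : ι → Bool) : {i // i ∉ B} → Bool := fun i => σ i
  have hsplit (σ : ι → Bool) : signedSum c σ = signedSum (fun i : B => c i) (inner σ) +
      signedSum (fun i : {i // i ∉ B} => c i) (outer σ) := by
    unfold signedSum
    convert (Fintype.sum_subtype_add_sum_subtype (· ∈ B) _).symm
  have hfiber : ∀ ρ ∈ F.image outer, #{σ ∈ F | outer σ = ρ} ≤ 2 * (#B).choose (#B / 2) := by
    intro ρ _
    set y := x - signedSum (fun i : {i // i ∉ B} => c i) ρ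
    calc #{σ ∈ F | outer σ = ρ}
        ≤ #{τ | signedSum (fun i : B => c i) τ ∈ Set.Icc y (y + 4 * r)} := by
          refine card_le_card_of_injOn inner (fun σ hσ => ?_) (fun σ hσ σ' hσ' h => ?_)
          · simp only [F, coe_filter, mem_filter, mem_univ, true_and, Set.mem_ofPred_eq] at hσ ⊢
            obtain ⟨⟨hlo, hhi⟩, rfl⟩ := hσ
            rw [hsplit] at hlo hhi
            constructor <;> linarith
          · simp only [coe_filter, Set.mem_ofPred_eq] at hσ hσ'
            funext i
            by_cases hi : i ∈ B
            · exact congrFun h ⟨i, hi⟩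
            · exact congrFun (hσ.2.trans hσ'.2.symm) ⟨i, hi⟩
      _ ≤ 2 * (#B).choose (#B / 2) := by
          simpa using card_signedSum_mem_Icc_le_of_forall_lt_abs hr (fun i : B => hB i i.2) y
  calc #F ≤ 2 * (#B).choose (#B / 2) * #(F.image outer) := card_le_mul_card_image F _ hfiber
    _ ≤ 2 * (#B).choose (#B / 2) * 2 ^ (Fintype.card ι - #B) := by
        gcongr
        refine (card_le_univ _).trans ?_
        simp [Fintype.card_subtype_compl]
    _ = _ := mul_comm _ _

lemma centralBinom_sq_mul_le (n : ℕ) : n.centralBinom ^ 2 * (2 * n + 1) ≤ 16 ^ n := by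
  induction n with
  | zero => simp
  | succ n ih =>
    refine Nat.le_of_mul_le_mul_left (c := (n + 1) ^ 2) ?_ (by positivity)
    calc (n + 1) ^ 2 * ((n + 1).centralBinom ^ 2 * (2 * (n + 1) + 1))
        = ((n + 1) * (n + 1).centralBinom) ^ 2 * (2 * n + 3) := by ring
      _ = 4 * (2 * n + 3) * (2 * n + 1) * (n.centralBinom ^ 2 * (2 * n + 1)) := by
          rw [Nat.succ_mul_centralBinom_succ]; ring
      _ ≤ 4 * (2 * n + 3) * (2 * n + 1) * 16 ^ n := by gcongr
      _ ≤ 16 * (n + 1) ^ 2 * 16 ^ n := Nat.mul_le_mul_right _ (by nlinarith)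
      _ = (n + 1) ^ 2 * 16 ^ (n + 1) := by ring

lemma choose_half_sq_mul_succ_le (m : ℕ) : m.choose (m / 2) ^ 2 * (m + 1) ≤ 4 ^ m := by
  obtain ⟨n, rfl | rfl⟩ := Nat.even_or_odd' m
  · have h := centralBinom_sq_mul_le n
    rw [Nat.centralBinom_eq_two_mul_choose] at h
    rwa [Nat.mul_div_cancel_left n two_pos, pow_mul]
  · have h := centralBinom_sq_mul_le (n + 1)
    rw [Nat.centralBinom_eq_two_mul_choose, show 2 * (n + 1) = 2 * n + 1 + 1 by ring,
      Nat.choose_succ_succ, Nat.choose_symm_half, pow_succ 16] at h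
    rw [show (2 * n + 1) / 2 = n by omega, pow_succ 4, pow_mul]
    norm_num at h ⊢
    nlinarith

lemma choose_half_div_two_pow_le (m : ℕ) :
    (m.choose (m / 2) : ℝ) / 2 ^ m ≤ 1 / √(m + 1) := by
  have h : ((m.choose (m / 2) : ℝ) * √(m + 1)) ^ 2 ≤ (2 ^ m) ^ 2 := by
    rw [mul_pow, Real.sq_sqrt (by positivity), ← pow_mul, mul_comm m, pow_mul]
    exact_mod_cast choose_half_sq_mul_succ_le m
  rw [div_le_div_iff₀ (by positivity) (by positivity), one_mul]
  exact (pow_le_pow_iff_left₀ (by positivity) (by positivity) two_ne_zero).1 h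

theorem card_signedSum_mem_Icc_div_le {ι : Type*} [Fintype ι] [DecidableEq ι] (c : ι → ℝ)
    {r : ℝ} (hr : 0 ≤ r) (B : Finset ι) (hB : ∀ i ∈ B, r < |c i|) (x : ℝ) :
    (#{σ | signedSum c σ ∈ Set.Icc x (x + 4 * r)} : ℝ) / 2 ^ Fintype.card ι ≤ 2 / √(#B + 1) := by
  have hcount : (#{σ | signedSum c σ ∈ Set.Icc x (x + 4 * r)} : ℝ) ≤
      2 ^ (Fintype.card ι - #B) * (2 * (#B).choose (#B / 2)) := by
    exact_mod_cast card_signedSum_mem_Icc_le c hr B hB x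
  calc _ ≤ (2 : ℝ) ^ (Fintype.card ι - #B) * (2 * (#B).choose (#B / 2)) / 2 ^ Fintype.card ι := by
        gcongr
    _ = 2 * (((#B).choose (#B / 2) : ℝ) / 2 ^ #B) := by
        rw [← pow_sub_mul_pow (2 : ℝ) (card_le_univ B)]
        field_simp
    _ ≤ 2 * (1 / √(#B + 1)) := mul_le_mul_of_nonneg_left (choose_half_div_two_pow_le _) zero_le_two
    _ = 2 / √(#B + 1) := mul_one_div _ _

lemma one_div_sqrt_add_one_le (x : ℝ) (hx : 0 ≤ x) : 1 / √(x + 1) ≤ 2 * (√(x + 1) - √x) := by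
  have hpos : 0 < √(x + 1) := Real.sqrt_pos.2 (by linarith)
  rw [div_le_iff₀ hpos]
  nlinarith [Real.sq_sqrt hx, Real.sq_sqrt (by linarith : 0 ≤ x + 1), sq_nonneg (√(x + 1) - √x)]

lemma sum_one_div_sqrt_card_filter_le (p : ℕ → Prop) [DecidablePred p] (T : ℕ) :
    ∑ t ∈ range T with p t, 1 / √(#{τ ∈ range t | p τ} + 1) ≤ 2 * √(#{t ∈ range T | p t} : ℝ) := by
  induction T with
  | zero => simp
  | succ T ih =>
    have hcard : #{t ∈ range (T + 1) | p t} = #{t ∈ range T | p t} + if p T then 1 else 0 := by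
      rw [card_filter, card_filter, sum_range_succ]
    rw [sum_filter, sum_range_succ, ← sum_filter, hcard]
    split_ifs with hT
    · have := one_div_sqrt_add_one_le (#{τ ∈ range T | p τ}) (Nat.cast_nonneg _)
      push_cast
      linarith
    · simpa using ih

lemma exists_lt_mem_Ioc_pow_half {x : ℝ} (hx : x ≤ 2) {n : ℕ} (hn : 2 * (1 / 2) ^ n < x) :
    ∃ k < n, x ∈ Set.Ioc ((1 / 2) ^ k) (2 * (1 / 2) ^ k) := by
  induction n with
  | zero => norm_num at hn; linarith
  | succ n ih =>
    by_cases h : 2 * (1 / 2) ^ n < x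
    · obtain ⟨k, hk, hkx⟩ := ih h
      exact ⟨k, by omega, hkx⟩
    · refine ⟨n, by omega, ?_, not_lt.1 h⟩
      rw [pow_succ] at hn
      linarith

lemma sum_le_sum_dyadic_add_sum {α : Type*} (s : Finset α) {g x : α → ℝ}
    (hg : ∀ i ∈ s, 0 ≤ g i) (hx : ∀ i ∈ s, x i ≤ 2) (n : ℕ) :
    ∑ i ∈ s, g i ≤ ∑ k ∈ range n, ∑ i ∈ s with x i ∈ Set.Ioc ((1 / 2) ^ k) (2 * (1 / 2) ^ k), g i +
      ∑ i ∈ s with x i ≤ 2 * (1 / 2) ^ n, g i := by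
  simp only [sum_filter]
  rw [sum_comm, ← sum_add_distrib]
  refine sum_le_sum fun i hi => ?_
  have hshells : 0 ≤ ∑ k ∈ range n,
      if x i ∈ Set.Ioc ((1 / 2) ^ k) (2 * (1 / 2) ^ k) then g i else 0 :=
    sum_nonneg fun k _ => ite_nonneg (hg i hi) le_rfl
  by_cases htail : x i ≤ 2 * (1 / 2) ^ n
  · rw [if_pos htail]
    linarith
  · obtain ⟨k, hk, hki⟩ := exists_lt_mem_Ioc_pow_half (hx i hi) (not_le.1 htail)
    rw [if_neg htail, add_zero]
    calc g i = if x i ∈ Set.Ioc ((1 / 2) ^ k) (2 * (1 / 2) ^ k) then g i else 0 := (if_pos hki).symm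
      _ ≤ _ := single_le_sum (f := fun k => if x i ∈ Set.Ioc ((1 / 2) ^ k) (2 * (1 / 2) ^ k)
          then g i else 0) (fun k _ => ite_nonneg (hg i hi) le_rfl) (mem_range.2 hk)

section Rademacher

variable {Ω : Type*} [MeasurableSpace Ω] {μ : Measure Ω} {ε : ℕ → Ω → ℝ}

lemma ae_forall_eq_one_or_eq_neg_one [IsProbabilityMeasure μ] (hmeas : ∀ t, Measurable (ε t))
    (hRad : ∀ t, μ {ω | ε t ω = 1} = 1 / 2 ∧ μ {ω | ε t ω = -1} = 1 / 2) :
    ∀ᵐ ω ∂μ, ∀ t, ε t ω = 1 ∨ ε t ω = -1 := by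
  refine ae_all_iff.2 fun t => ae_iff.2 ?_
  have h₁ : MeasurableSet {ω | ε t ω = 1} := hmeas t (measurableSet_singleton 1)
  have h₂ : MeasurableSet {ω | ε t ω = -1} := hmeas t (measurableSet_singleton (-1))
  have hdisj : Disjoint {ω | ε t ω = 1} {ω | ε t ω = -1} :=
    Set.disjoint_left.2 fun ω (h : ε t ω = 1) (h' : ε t ω = -1) => by norm_num [h] at h'
  rw [show {ω | ¬(ε t ω = 1 ∨ ε t ω = -1)} = ({ω | ε t ω = 1} ∪ {ω | ε t ω = -1})ᶜ by ext; simp,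
    prob_compl_eq_zero_iff (h₁.union h₂), measure_union hdisj h₂, (hRad t).1, (hRad t).2,
    ENNReal.add_halves]

lemma measure_iInter_preimage_sign (hIndep : iIndepFun ε μ)
    (hRad : ∀ t, μ {ω | ε t ω = 1} = 1 / 2 ∧ μ {ω | ε t ω = -1} = 1 / 2)
    {t : ℕ} (σ : Fin t → Bool) :
    μ (⋂ i : Fin t, ε i ⁻¹' {if σ i then 1 else -1}) = (2 ^ t)⁻¹ := by
  have h := (hIndep.precomp Fin.val_injective).measure_inter_preimage_eq_mul univ
    (sets := fun i => {if σ i then 1 else -1}) fun _ _ => measurableSet_singleton _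
  simp only [mem_univ, Set.iInter_true] at h
  have hfactor (i : Fin t) : μ (ε i ⁻¹' {if σ i then 1 else -1}) = 2⁻¹ := by
    rw [← one_div]
    cases σ i
    · exact (hRad i).2
    · exact (hRad i).1
  simp only [h, hfactor, prod_const, card_univ, Fintype.card_fin, ENNReal.inv_pow]

theorem measure_sum_mul_mem_le_s11 [IsProbabilityMeasure μ] (hmeas : ∀ t, Measurable (ε t))
    (hIndep : iIndepFun ε μ)
    (hRad : ∀ t, μ {ω | ε t ω = 1} = 1 / 2 ∧ μ {ω | ε t ω = -1} = 1 / 2)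
    (t : ℕ) (c : ℕ → ℝ) (s : Set ℝ) [DecidablePred (· ∈ s)] :
    μ {ω | ∑ i ∈ range t, ε i ω * c i ∈ s} ≤
      #{σ : Fin t → Bool | signedSum (fun i : Fin t => c i) σ ∈ s} * (2 ^ t)⁻¹ := by
  set F : Finset (Fin t → Bool) := {σ | signedSum (fun i : Fin t => c i) σ ∈ s}
  calc μ {ω | ∑ i ∈ range t, ε i ω * c i ∈ s}
      ≤ μ (⋃ σ ∈ F, ⋂ i : Fin t, ε i ⁻¹' {if σ i then 1 else -1}) := by
        refine measure_mono_ae ?_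
        filter_upwards [ae_forall_eq_one_or_eq_neg_one hmeas hRad] with ω hω (hs : _ ∈ s)
        show ω ∈ ⋃ σ ∈ F, _
        simp only [Set.mem_iUnion, Set.mem_iInter, Set.mem_preimage, Set.mem_singleton_iff]
        refine ⟨fun i => decide (ε i ω = 1), ?_,
          fun i => by rcases hω i with h | h <;> norm_num [h]⟩
        simp only [F, mem_filter, mem_univ, true_and, signedSum]
        rw [← Fin.sum_univ_eq_sum_range (fun i => ε i ω * c i)] at hs
        convert hs using 2 with i
        rcases hω i with h | h <;> norm_num [h]
    _ ≤ ∑ σ ∈ F, μ (⋂ i : Fin t, ε i ⁻¹' {if σ i then 1 else -1}) :=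
        measure_biUnion_finset_le _ _
    _ = #F * (2 ^ t)⁻¹ := by
        simp only [measure_iInter_preimage_sign hIndep hRad, sum_const, nsmul_eq_mul]

theorem measureReal_sum_mul_mem_Icc_le [IsProbabilityMeasure μ] (hmeas : ∀ t, Measurable (ε t))
    (hIndep : iIndepFun ε μ)
    (hRad : ∀ t, μ {ω | ε t ω = 1} = 1 / 2 ∧ μ {ω | ε t ω = -1} = 1 / 2)
    (t : ℕ) (c : ℕ → ℝ) {r : ℝ} (hr : 0 ≤ r) (x : ℝ) :
    μ.real {ω | ∑ i ∈ range t, ε i ω * c i ∈ Set.Icc x (x + 4 * r)} ≤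
      2 / √(#{i ∈ range t | r < |c i|} + 1) := by
  have hcard : #{i ∈ range t | r < |c i|} = #{i : Fin t | r < |c i|} := by
    rw [card_filter, card_filter, Fin.sum_univ_eq_sum_range (fun i => if r < |c i| then 1 else 0)]
  rw [hcard]
  refine (ENNReal.toReal_mono ?_ (measure_sum_mul_mem_le_s11 hmeas hIndep hRad t c _)).trans ?_
  · finiteness
  · simpa [ENNReal.toReal_mul, div_eq_mul_inv] using card_signedSum_mem_Icc_div_le
      (fun i : Fin t => c i) hr _ (fun i hi => (mem_filter.1 hi).2) x

def switchingProb (μ : Measure Ω) (ε : ℕ → Ω → ℝ) (d : ℕ → ℝ) (t : ℕ) : ℝ :=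
  μ.real {ω | (-∑ τ ∈ range t, d τ ≤ ∑ τ ∈ range t, ε τ ω * d τ) ∧
    (∑ τ ∈ range (t + 1), ε τ ω * d τ ≤ -∑ τ ∈ range (t + 1), d τ)}

theorem switchingProb_le [IsProbabilityMeasure μ] (hmeas : ∀ t, Measurable (ε t))
    (hIndep : iIndepFun ε μ)
    (hRad : ∀ t, μ {ω | ε t ω = 1} = 1 / 2 ∧ μ {ω | ε t ω = -1} = 1 / 2)
    (d : ℕ → ℝ) (t : ℕ) {r : ℝ} (hr : 0 ≤ r) (hdt : |d t| ≤ 2 * r) :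
    switchingProb μ ε d t ≤ 2 / √(#{τ ∈ range t | r < |d τ|} + 1) := by
  refine (ENNReal.toReal_mono (measure_ne_top _ _) (measure_mono_ae ?_)).trans
    (measureReal_sum_mul_mem_Icc_le hmeas hIndep hRad t d hr (-∑ τ ∈ range t, d τ))
  filter_upwards [ae_forall_eq_one_or_eq_neg_one hmeas hRad] with ω hω ⟨hlo, hhi⟩
  rw [sum_range_succ, sum_range_succ] at hhi
  refine ⟨hlo, ?_⟩
  have := neg_abs_le (d t)
  rcases hω t with h | h <;> rw [h] at hhi <;> linarith

theorem sum_dyadic_shell_switchingProb_le [IsProbabilityMeasure μ]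
    (hmeas : ∀ t, Measurable (ε t)) (hIndep : iIndepFun ε μ)
    (hRad : ∀ t, μ {ω | ε t ω = 1} = 1 / 2 ∧ μ {ω | ε t ω = -1} = 1 / 2)
    (d : ℕ → ℝ) (T k : ℕ) :
    ∑ t ∈ range T with |d t| ∈ Set.Ioc ((1 / 2) ^ k) (2 * (1 / 2) ^ k),
      |d t| * switchingProb μ ε d t ≤ 8 * (1 / 2) ^ k * √T := by
  set p : ℕ → Prop := fun t => |d t| ∈ Set.Ioc ((1 / 2) ^ k) (2 * (1 / 2) ^ k)
  calc ∑ t ∈ range T with p t, |d t| * switchingProb μ ε d t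
      ≤ ∑ t ∈ range T with p t, 2 * (1 / 2) ^ k * (2 / √(#{τ ∈ range t | p τ} + 1)) := by
        refine sum_le_sum fun t ht => ?_
        have hpt : p t := (mem_filter.1 ht).2
        have hP := switchingProb_le hmeas hIndep hRad d t (by positivity) hpt.2
        gcongr
        · exact measureReal_nonneg
        · exact hpt.2
        · refine hP.trans ?_
          gcongr with τ
          exact And.left
    _ = 4 * (1 / 2) ^ k * ∑ t ∈ range T with p t, 1 / √(#{τ ∈ range t | p τ} + 1) := by
        rw [mul_sum]
        refine sum_congr rfl fun t _ => ?_
        ring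
    _ ≤ 4 * (1 / 2) ^ k * (2 * √(#{t ∈ range T | p t} : ℝ)) := by
        gcongr
        exact sum_one_div_sqrt_card_filter_le p T
    _ ≤ 8 * (1 / 2) ^ k * √T := by
        have hcard : (#{t ∈ range T | p t} : ℝ) ≤ T := by
          exact_mod_cast (card_filter_le _ _).trans (card_range T).le
        have := Real.sqrt_le_sqrt hcard
        nlinarith [pow_pos (one_half_pos (α := ℝ)) k]

theorem sum_small_switchingProb_le [IsProbabilityMeasure μ] (d : ℕ → ℝ) (T : ℕ) :
    ∑ t ∈ range T with |d t| ≤ 2 * (1 / 2) ^ T, |d t| * switchingProb μ ε d t ≤ 2 := by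
  calc ∑ t ∈ range T with |d t| ≤ 2 * (1 / 2) ^ T, |d t| * switchingProb μ ε d t
      ≤ ∑ t ∈ range T with |d t| ≤ 2 * (1 / 2) ^ T, 2 * (1 / 2 : ℝ) ^ T := by
        refine sum_le_sum fun t ht => ?_
        have hP₀ : 0 ≤ switchingProb μ ε d t := measureReal_nonneg
        have hP₁ : switchingProb μ ε d t ≤ 1 := measureReal_le_one
        nlinarith [(mem_filter.1 ht).2, abs_nonneg (d t)]
    _ ≤ ∑ t ∈ range T, 2 * (1 / 2 : ℝ) ^ T :=
        sum_le_sum_of_subset_of_nonneg (filter_subset _ _) fun t _ _ => by positivity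
    _ = 2 * (T / 2 ^ T) := by rw [sum_const, card_range, nsmul_eq_mul, one_div, inv_pow]; ring
    _ ≤ 2 := by
        have : (T : ℝ) < 2 ^ T := by exact_mod_cast Nat.lt_two_pow_self
        have : (T : ℝ) / 2 ^ T ≤ 1 := (div_le_one (by positivity)).2 this.le
        linarith

end Rademacher

lemma eighteen_mul_sqrt_le {x : ℝ} (hx : 2 ≤ x) :
    18 * √x ≤ 20 * (2 * √2 * Real.exp 1 / Real.pi) * √(x * Real.logb 2 (4 * Real.logb 2 x)) := by
  have hlog : 1 ≤ Real.logb 2 x := by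
    rw [Real.le_logb_iff_rpow_le one_lt_two (by linarith)]
    simpa using hx
  have hloglog : 1 ≤ Real.logb 2 (4 * Real.logb 2 x) := by
    rw [Real.le_logb_iff_rpow_le one_lt_two (by positivity)]
    norm_num
    linarith
  have hconst : 1 ≤ 2 * √2 * Real.exp 1 / Real.pi := by
    rw [le_div_iff₀ Real.pi_pos]
    nlinarith [Real.add_one_le_exp 1, Real.pi_le_four, Real.one_le_sqrt.2 one_le_two]
  have hsqrt : √x ≤ √(x * Real.logb 2 (4 * Real.logb 2 x)) :=
    Real.sqrt_le_sqrt (le_mul_of_one_le_right (by linarith) hloglog)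
  nlinarith [Real.sqrt_nonneg x]

/-- Time is 0-indexed: index `t` stands for the paper's round `t + 1`. -/
theorem switching_sum_total_bound
    {Ω : Type*} [MeasurableSpace Ω] (μ : Measure Ω) [IsProbabilityMeasure μ]
    (T : ℕ) (hT : 2 ≤ T) (d : ℕ → ℝ) (hd : ∀ t, |d t| ≤ 2)
    (ε : ℕ → Ω → ℝ) (hmeas : ∀ t, Measurable (ε t))
    (hIndep : iIndepFun ε μ)
    (hRad : ∀ t, μ {ω | ε t ω = 1} = 1 / 2 ∧ μ {ω | ε t ω = -1} = 1 / 2) :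
    ∑ t ∈ Finset.range T, |d t| *
        (μ {ω | (-∑ τ ∈ Finset.range t, d τ ≤ ∑ τ ∈ Finset.range t, ε τ ω * d τ) ∧
                (∑ τ ∈ Finset.range (t + 1), ε τ ω * d τ
                  ≤ -∑ τ ∈ Finset.range (t + 1), d τ)}).toReal
      ≤ 20 * (2 * Real.sqrt 2 * Real.exp 1 / Real.pi) *
          Real.sqrt (T * Real.logb 2 (4 * Real.logb 2 T)) := by
  change ∑ t ∈ range T, |d t| * switchingProb μ ε d t ≤ _
  calc ∑ t ∈ range T, |d t| * switchingProb μ ε d t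
      ≤ ∑ k ∈ range T, ∑ t ∈ range T with |d t| ∈ Set.Ioc ((1 / 2) ^ k) (2 * (1 / 2) ^ k),
          |d t| * switchingProb μ ε d t +
        ∑ t ∈ range T with |d t| ≤ 2 * (1 / 2) ^ T, |d t| * switchingProb μ ε d t :=
        sum_le_sum_dyadic_add_sum _ (fun t _ => mul_nonneg (abs_nonneg _) measureReal_nonneg)
          (fun t _ => hd t) T
    _ ≤ ∑ k ∈ range T, 8 * (1 / 2) ^ k * √T + 2 :=
        add_le_add (sum_le_sum fun k _ => sum_dyadic_shell_switchingProb_le hmeas hIndep hRad d T k)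
          (sum_small_switchingProb_le d T)
    _ ≤ 18 * √T := by
        rw [← sum_mul, ← mul_sum]
        have hT' : (1 : ℝ) ≤ √T := Real.one_le_sqrt.2 (by exact_mod_cast (by omega : 1 ≤ T))
        nlinarith [sum_geometric_two_le T]
    _ ≤ _ := eighteen_mul_sqrt_le (by exact_mod_cast hT)
end

section
/- Sampled fictitious play with Bernoulli(1/2) sampling has expected regret Ω(N) on a horizon T = 2N. Precisely, in the setting below with the explicit N × 2N payoff matrix — in odd round 2m−1 every strategy gets payoff −1 except strategy m, which gets 0; in even round 2m strategies 1 through m get payoff −1 and strategies m+1 through N get payoff 0 — the expected regret of sampled fictitious play over T = 2N rounds satisfies E[R_{2N}] ≥ N/2 − H_N, where H_N = Σ_{j=1}^N 1/j is the N-th harmonic number; in particular E[R_{2N}] = Ω(N) as N → ∞. -/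
open MeasureTheory ProbabilityTheory

open scoped Classical in
/-- The set of strategies maximizing a score function. -/
noncomputable def argmaxSet {N : ℕ} (f : Fin N → ℝ) : Finset (Fin N) :=
  Finset.univ.filter (fun j => ∀ j', f j' ≤ f j)

/-- Uniform selection from a finite set of strategies: given `u` uniform on `[0,1)`, `pick`
returns the `⌊u·|s|⌋`-th element of `s` in increasing order, which is a uniformly random
element of `s` whenever `s` is nonempty. -/
noncomputable def pick {N : ℕ} [NeZero N] (s : Finset (Fin N)) (u : ℝ) : Fin N :=
  (s.sort (· ≤ ·)).getD ⌊u * s.card⌋.toNat 0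

/-- The counterexample payoff matrix, in 0-indexed time: at even time `t = 2m` (the paper's
odd round `2m+1`) every strategy gets `−1` except strategy `m`, which gets `0`; at odd time
`t = 2m+1` (the paper's even round `2m+2`) strategies `0,…,m` get `−1` and strategies
`m+1,…,N−1` get `0`. -/
noncomputable def counterexamplePayoff (N : ℕ) (t : ℕ) (j : Fin N) : ℝ :=
  if t % 2 = 0 then (if (j : ℕ) = t / 2 then 0 else -1)
  else (if (j : ℕ) ≤ t / 2 then -1 else 0)

/-!
Against this payoff sequence the best fixed strategy is `N - 1`, with total payoff `-N`, and the
expected regret equals `∑_{m<N} (P(k_{2m+1} ≤ m) - P(k_{2m} = m))` (times are 0-indexed).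
Before time `2m` the strategies `m, …, N-1` have received identical payoffs, so whenever `m`
maximizes the sampled score at time `2m`, all of them do, and the tie-breaking variable, being
independent of the samples, selects `m` with probability at most `1/(N-m)`. At time `2m+1`, with
probability `1/2` round `2m` is sampled with weight `2`, which puts every `j > m` strictly
behind `m`, so the player plays some `j ≤ m`. Summing gives `N/2 - H_N`.
-/

open Finset
open scoped ENNReal

lemma sum_range_two_mul {M : Type*} [AddCommMonoid M] (f : ℕ → M) (n : ℕ) :
    ∑ t ∈ range (2 * n), f t = ∑ m ∈ range n, (f (2 * m) + f (2 * m + 1)) := by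
  induction n with
  | zero => simp
  | succ n ih => rw [Nat.mul_succ, sum_range_succ, sum_range_succ, sum_range_succ, ih, add_assoc]

section Payoff

variable {N : ℕ}

lemma counterexamplePayoff_two_mul (m : ℕ) (j : Fin N) :
    counterexamplePayoff N (2 * m) j = if (j : ℕ) = m then 0 else -1 := by
  simp [counterexamplePayoff]

lemma counterexamplePayoff_two_mul_add_one (m : ℕ) (j : Fin N) :
    counterexamplePayoff N (2 * m + 1) j = if (j : ℕ) ≤ m then -1 else 0 := by
  simp [counterexamplePayoff, Nat.add_mod, show (2 * m + 1) / 2 = m by omega]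

lemma counterexamplePayoff_eq_of_lt_two_mul {m τ : ℕ} (hτ : τ < 2 * m) {j j' : Fin N}
    (hj : m ≤ j) (hj' : m ≤ j') :
    counterexamplePayoff N τ j = counterexamplePayoff N τ j' := by
  unfold counterexamplePayoff
  split_ifs <;> first | rfl | omega

lemma counterexamplePayoff_two_mul_add_two_mul_add_one (m : ℕ) (j : Fin N) :
    counterexamplePayoff N (2 * m) j + counterexamplePayoff N (2 * m + 1) j
      = (if m ≤ j then 1 else 0) - 2 := by
  rw [counterexamplePayoff_two_mul, counterexamplePayoff_two_mul_add_one]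
  split_ifs <;> first | omega | norm_num

lemma sum_counterexamplePayoff (j : Fin N) :
    ∑ t ∈ range (2 * N), counterexamplePayoff N t j = (j : ℝ) + 1 - 2 * N := by
  have hfilter : (range N).filter (· ≤ (j : ℕ)) = range (j + 1) := by
    ext m; simp only [mem_filter, mem_range]; omega
  simp_rw [sum_range_two_mul, counterexamplePayoff_two_mul_add_two_mul_add_one, sum_sub_distrib,
    sum_boole, hfilter]
  simp only [card_range, Nat.cast_add, Nat.cast_one, sum_const, nsmul_eq_mul, sub_right_inj]
  ring

lemma iSup_sum_counterexamplePayoff [NeZero N] :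
    ⨆ j : Fin N, ∑ t ∈ range (2 * N), counterexamplePayoff N t j = -N := by
  have hN := NeZero.pos N
  simp_rw [sum_counterexamplePayoff]
  refine le_antisymm (ciSup_le fun j => ?_) (le_ciSup_of_le (Set.finite_range _).bddAbove
    ⟨N - 1, by omega⟩ ?_)
  · have : (j : ℝ) + 1 ≤ N := by exact_mod_cast j.isLt
    linarith
  · simp [Nat.cast_sub (Nat.one_le_of_lt hN), two_mul]

end Payoff

section Selection

variable {N : ℕ}

lemma mem_argmaxSet {f : Fin N → ℝ} {j : Fin N} : j ∈ argmaxSet f ↔ ∀ j', f j' ≤ f j := by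
  simp [argmaxSet]

lemma argmaxSet_nonempty [NeZero N] (f : Fin N → ℝ) : (argmaxSet f).Nonempty := by
  obtain ⟨j, -, hj⟩ := univ.exists_max_image f univ_nonempty
  exact ⟨j, mem_argmaxSet.2 fun j' => hj j' (mem_univ j')⟩

lemma mem_argmaxSet_congr {f : Fin N → ℝ} {j j' : Fin N} (h : f j = f j') :
    j ∈ argmaxSet f ↔ j' ∈ argmaxSet f := by
  simp only [mem_argmaxSet, h]

lemma measurable_argmaxSet : Measurable (argmaxSet : (Fin N → ℝ) → Finset (Fin N)) := by
  refine measurable_finset_iff.2 fun j => ?_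
  simp_rw [mem_argmaxSet]
  exact .forall fun j' =>
    measurableSet_setOfPred.1 (measurableSet_le (measurable_pi_apply j') (measurable_pi_apply j))

variable [NeZero N]

lemma pick_mem_or_eq_zero (s : Finset (Fin N)) (x : ℝ) : pick s x ∈ s ∨ pick s x = 0 := by
  unfold pick
  by_cases h : ⌊x * #s⌋.toNat < (s.sort (· ≤ ·)).length
  · exact .inl ((mem_sort _).1 (List.getD_eq_getElem _ _ h ▸ List.getElem_mem h))
  · exact .inr (List.getD_eq_default _ _ (not_lt.1 h))

lemma floor_mul_lt_of_lt_one {x : ℝ} (hx : x < 1) {n : ℕ} (hn : 0 < n) : ⌊x * n⌋₊ < n := by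
  rw [Nat.floor_lt' hn.ne']
  nlinarith [(Nat.cast_pos (α := ℝ)).2 hn]

lemma pick_eq_getElem {s : Finset (Fin N)} (hs : s.Nonempty) {x : ℝ} (hx : x < 1) :
    pick s x = (s.sort (· ≤ ·))[⌊x * #s⌋₊]'(by
      rw [length_sort]; exact floor_mul_lt_of_lt_one hx hs.card_pos) := by
  rw [pick, Int.floor_toNat, List.getD_eq_getElem]

lemma pick_mem {s : Finset (Fin N)} (hs : s.Nonempty) {x : ℝ} (hx : x < 1) : pick s x ∈ s := by
  rw [pick_eq_getElem hs hx]
  exact (mem_sort _).1 (List.getElem_mem _)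

lemma volume_pick_eq_le {s : Finset (Fin N)} {j : Fin N} (hj : j ∈ s) :
    volume ({x | pick s x = j} ∩ Set.Ico 0 1) ≤ (#s : ℝ≥0∞)⁻¹ := by
  have hs : s.Nonempty := ⟨j, hj⟩
  have hc : (0 : ℝ) < #s := by exact_mod_cast hs.card_pos
  obtain ⟨i, hi⟩ : ∃ i, (s.sort (· ≤ ·)).idxOf j = i := ⟨_, rfl⟩
  have hsub : {x | pick s x = j} ∩ Set.Ico 0 1 ⊆ Set.Ico (i / #s : ℝ) ((i + 1) / #s) := by
    rintro x ⟨hpick, hx0, hx1⟩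
    have hfloor : ⌊x * #s⌋₊ = i := by
      rw [Set.mem_ofPred_eq, pick_eq_getElem hs hx1] at hpick
      rw [← hi, ← hpick, (s.sort_nodup _).idxOf_getElem]
    obtain ⟨hlo, hhi⟩ := (Nat.floor_eq_iff (by positivity)).1 hfloor
    exact ⟨by rwa [div_le_iff₀ hc], by rwa [lt_div_iff₀ hc]⟩
  calc volume ({x | pick s x = j} ∩ Set.Ico 0 1)
      ≤ volume (Set.Ico (i / #s : ℝ) ((i + 1) / #s)) := measure_mono hsub
    _ = (#s : ℝ≥0∞)⁻¹ := by
      rw [Real.volume_Ico, ← sub_div, add_sub_cancel_left, one_div,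
        ENNReal.ofReal_inv_of_pos hc, ENNReal.ofReal_natCast]

lemma measurable_pick (s : Finset (Fin N)) : Measurable (pick s) :=
  (measurable_from_top (f := fun n : ℤ => (s.sort (· ≤ ·)).getD n.toNat 0)).comp
    (Int.measurable_floor.comp (measurable_id.mul_const _))

lemma measurable_pick_uncurry : Measurable fun p : Finset (Fin N) × ℝ => pick p.1 p.2 :=
  measurable_from_prod_countable_right measurable_pick

lemma measure_pick_eq_le {Ω : Type*} [MeasurableSpace Ω] {μ : Measure Ω}
    [IsProbabilityMeasure μ] {S : Ω → Finset (Fin N)} {U : Ω → ℝ} (hS : Measurable S)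
    (hU : Measurable U) (hSU : IndepFun S U μ)
    (hUunif : μ.map U = volume.restrict (Set.Ico 0 1)) {j : Fin N} {n : ℕ}
    (hSne : ∀ ω, (S ω).Nonempty) (hn : ∀ ω, j ∈ S ω → n ≤ #(S ω)) :
    μ {ω | pick (S ω) (U ω) = j} ≤ (n : ℝ≥0∞)⁻¹ := by
  have hP : MeasurableSet {p : Finset (Fin N) × ℝ | pick p.1 p.2 = j} :=
    measurable_pick_uncurry (measurableSet_singleton j)
  have hslice : ∀ ω, volume.restrict (Set.Ico 0 1) {x | pick (S ω) x = j} ≤ (n : ℝ≥0∞)⁻¹ := by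
    intro ω
    rw [Measure.restrict_apply' measurableSet_Ico]
    by_cases hj : j ∈ S ω
    · exact (volume_pick_eq_le hj).trans (ENNReal.inv_le_inv.2 (by exact_mod_cast hn ω hj))
    · have hempty : {x | pick (S ω) x = j} ∩ Set.Ico 0 1 = ∅ :=
        Set.eq_empty_of_forall_notMem fun x ⟨hx, _, hx1⟩ => hj (hx ▸ pick_mem (hSne ω) hx1)
      simp [hempty]
  calc μ {ω | pick (S ω) (U ω) = j}
      = μ.map (fun ω => (S ω, U ω)) {p | pick p.1 p.2 = j} :=
        (Measure.map_apply (hS.prodMk hU) hP).symm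
    _ = ∫⁻ s, volume.restrict (Set.Ico 0 1) {x | pick s x = j} ∂μ.map S := by
        rw [hSU.map_prod_eq_prod_map_map hS.aemeasurable hU.aemeasurable, hUunif,
          Measure.prod_apply hP]
        rfl
    _ = ∫⁻ ω, volume.restrict (Set.Ico 0 1) {x | pick (S ω) x = j} ∂μ :=
        lintegral_map (measurable_of_countable _) hS
    _ ≤ ∫⁻ _, (n : ℝ≥0∞)⁻¹ ∂μ := lintegral_mono hslice
    _ = (n : ℝ≥0∞)⁻¹ := by simp

end Selection

section Play

variable {N : ℕ} {Ω : Type*}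

/-- `e t τ` is the paper's `ε^{(t)}_τ`, drawn afresh at every time `t`. -/
def sampledScore (e : ℕ → ℕ → Ω → ℝ) (g : ℕ → Fin N → ℝ) (t : ℕ) (ω : Ω) (j : Fin N) : ℝ :=
  ∑ τ ∈ range t, (1 + e t τ ω) * g τ j

noncomputable def sampledPlay [NeZero N] (e : ℕ → ℕ → Ω → ℝ) (u : ℕ → Ω → ℝ)
    (g : ℕ → Fin N → ℝ) (t : ℕ) (ω : Ω) : Fin N :=
  pick (argmaxSet (sampledScore e g t ω)) (u t ω)

lemma measurable_sampledScore [MeasurableSpace Ω] {e : ℕ → ℕ → Ω → ℝ}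
    (he : ∀ t τ, Measurable (e t τ)) (g : ℕ → Fin N → ℝ) (t : ℕ) :
    Measurable (sampledScore e g t) :=
  measurable_pi_lambda _ fun _ => Finset.measurable_sum _ fun τ _ =>
    (measurable_const.add (he t τ)).mul_const _

lemma measurable_sampledPlay [NeZero N] [MeasurableSpace Ω] {e : ℕ → ℕ → Ω → ℝ} {u : ℕ → Ω → ℝ}
    (he : ∀ t τ, Measurable (e t τ)) (hu : ∀ t, Measurable (u t)) (g : ℕ → Fin N → ℝ)
    (t : ℕ) : Measurable (sampledPlay e u g t) :=
  measurable_pick_uncurry.comp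
    ((measurable_argmaxSet.comp (measurable_sampledScore he g t)).prodMk (hu t))

lemma indepFun_sampledScore [MeasurableSpace Ω] {μ : Measure Ω} {e : ℕ → ℕ → Ω → ℝ}
    {u : ℕ → Ω → ℝ} (he : ∀ t τ, Measurable (e t τ)) (hu : ∀ t, Measurable (u t))
    (hindep : iIndepFun (fun (p : (ℕ × ℕ) ⊕ ℕ) (ω : Ω) =>
      Sum.elim (fun q => e q.1 q.2 ω) (fun n => u n ω) p) μ)
    (g : ℕ → Fin N → ℝ) (t : ℕ) : IndepFun (sampledScore e g t) (u t) μ := by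
  let S : Finset ((ℕ × ℕ) ⊕ ℕ) := (range t).image fun τ => .inl (t, τ)
  have hST : Disjoint S {.inr t} := by simp [S]
  have hmeas : ∀ p : (ℕ × ℕ) ⊕ ℕ,
      Measurable fun ω => Sum.elim (fun q => e q.1 q.2 ω) (fun n => u n ω) p := by
    rintro (⟨a, b⟩ | n)
    exacts [he a b, hu n]
  let φ : (S → ℝ) → Fin N → ℝ := fun v j =>
    ∑ τ ∈ range t, (1 + if h : .inl (t, τ) ∈ S then v ⟨_, h⟩ else 0) * g τ j
  have hφ : Measurable φ := by
    refine measurable_pi_lambda _ fun j => Finset.measurable_sum _ fun τ _ => ?_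
    split_ifs <;> fun_prop
  convert (hindep.indepFun_finset S {.inr t} hST hmeas).comp hφ
    (measurable_pi_apply ⟨.inr t, mem_singleton_self _⟩) using 1
  · funext ω j
    refine sum_congr rfl fun τ hτ => ?_
    rw [dif_pos (mem_image_of_mem _ hτ)]
    rfl
  · rfl

end Play

section Counterexample

variable {N : ℕ} {Ω : Type*}

lemma sum_mul_counterexamplePayoff_eq (w : ℕ → ℝ) {m : ℕ} {j j' : Fin N} (hj : m ≤ j)
    (hj' : m ≤ j') :
    ∑ τ ∈ range (2 * m), w τ * counterexamplePayoff N τ j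
      = ∑ τ ∈ range (2 * m), w τ * counterexamplePayoff N τ j' :=
  sum_congr rfl fun _ hτ => by
    rw [counterexamplePayoff_eq_of_lt_two_mul (mem_range.1 hτ) hj hj']

lemma Ici_subset_argmaxSet_sampledScore (e : ℕ → ℕ → Ω → ℝ) (ω : Ω) {m : ℕ} (hm : m < N)
    (h : ⟨m, hm⟩ ∈ argmaxSet (sampledScore e (counterexamplePayoff N) (2 * m) ω)) :
    Ici ⟨m, hm⟩ ⊆ argmaxSet (sampledScore e (counterexamplePayoff N) (2 * m) ω) :=
  fun _ hj => (mem_argmaxSet_congr (sum_mul_counterexamplePayoff_eq _ le_rfl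
    (Fin.le_iff_val_le_val.1 (mem_Ici.1 hj)))).1 h

lemma le_of_mem_argmaxSet_sampledScore {e : ℕ → ℕ → Ω → ℝ} {ω : Ω} {m : ℕ} (hm : m < N)
    (he : e (2 * m + 1) (2 * m) ω = 1) {j : Fin N}
    (hj : j ∈ argmaxSet (sampledScore e (counterexamplePayoff N) (2 * m + 1) ω)) :
    (j : ℕ) ≤ m := by
  by_contra! hmj
  have hlt : sampledScore e (counterexamplePayoff N) (2 * m + 1) ω j
      < sampledScore e (counterexamplePayoff N) (2 * m + 1) ω ⟨m, hm⟩ := by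
    simp only [sampledScore, sum_range_succ, he, counterexamplePayoff_two_mul,
      sum_mul_counterexamplePayoff_eq _ hmj.le (j' := ⟨m, hm⟩) le_rfl]
    simp [hmj.ne']
  exact hlt.not_ge (mem_argmaxSet.1 hj _)

end Counterexample

section Probability

variable {N : ℕ} {Ω : Type*} [MeasurableSpace Ω] {μ : Measure Ω}

lemma measureReal_sampledPlay_two_mul_le [IsProbabilityMeasure μ] [NeZero N]
    {e : ℕ → ℕ → Ω → ℝ} {u : ℕ → Ω → ℝ}
    (he : ∀ t τ, Measurable (e t τ)) (hu : ∀ t, Measurable (u t))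
    (hindep : iIndepFun (fun (p : (ℕ × ℕ) ⊕ ℕ) (ω : Ω) =>
      Sum.elim (fun q => e q.1 q.2 ω) (fun n => u n ω) p) μ)
    (hunif : ∀ t, μ.map (u t) = volume.restrict (Set.Ico 0 1)) {m : ℕ} (hm : m < N) :
    μ.real {ω | (sampledPlay e u (counterexamplePayoff N) (2 * m) ω : ℕ) = m}
      ≤ ((N : ℝ) - m)⁻¹ := by
  let F := sampledScore e (counterexamplePayoff N) (2 * m)
  have hbound : μ {ω | pick (argmaxSet (F ω)) (u (2 * m) ω) = ⟨m, hm⟩}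
      ≤ ((N - m : ℕ) : ℝ≥0∞)⁻¹ :=
    measure_pick_eq_le (measurable_argmaxSet.comp (measurable_sampledScore he _ _)) (hu _)
      ((indepFun_sampledScore he hu hindep _ _).comp measurable_argmaxSet measurable_id)
      (hunif _) (fun ω => argmaxSet_nonempty (F ω)) fun ω hmem =>
        Fin.card_Ici (a := ⟨m, hm⟩) ▸ card_le_card (Ici_subset_argmaxSet_sampledScore e ω hm hmem)
  have hcast : (((N - m : ℕ) : ℝ≥0∞)⁻¹).toReal = ((N : ℝ) - m)⁻¹ := by
    rw [ENNReal.toReal_inv, ENNReal.toReal_natCast, Nat.cast_sub hm.le]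
  simp only [Fin.ext_iff] at hbound
  rw [← hcast, measureReal_def]
  exact ENNReal.toReal_mono
    (ENNReal.inv_ne_top.2 (Nat.cast_ne_zero.2 (Nat.sub_ne_zero_of_lt hm))) hbound

lemma half_le_measureReal_sampledPlay_two_mul_add_one [IsFiniteMeasure μ] [NeZero N]
    {e : ℕ → ℕ → Ω → ℝ} (u : ℕ → Ω → ℝ) {m : ℕ} (hm : m < N)
    (he : μ {ω | e (2 * m + 1) (2 * m) ω = 1} = 1 / 2) :
    1 / 2 ≤ μ.real {ω | (sampledPlay e u (counterexamplePayoff N) (2 * m + 1) ω : ℕ) ≤ m} := by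
  have hsub : {ω | e (2 * m + 1) (2 * m) ω = 1}
      ⊆ {ω | (sampledPlay e u (counterexamplePayoff N) (2 * m + 1) ω : ℕ) ≤ m} := by
    intro ω hω
    rcases pick_mem_or_eq_zero (argmaxSet (sampledScore e (counterexamplePayoff N) (2 * m + 1) ω))
      (u (2 * m + 1) ω) with hmem | hzero
    · exact le_of_mem_argmaxSet_sampledScore hm hω hmem
    · simp [sampledPlay, hzero]
  calc (1 / 2 : ℝ) = μ.real {ω | e (2 * m + 1) (2 * m) ω = 1} := by simp [measureReal_def, he]
    _ ≤ _ := measureReal_mono hsub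


lemma integral_counterexamplePayoff_two_mul [IsProbabilityMeasure μ] {k : Ω → Fin N}
    (hk : Measurable k) (m : ℕ) :
    ∫ ω, counterexamplePayoff N (2 * m) (k ω) ∂μ = μ.real {ω | (k ω : ℕ) = m} - 1 := by
  have hset : MeasurableSet {ω | (k ω : ℕ) = m} :=
    hk (MeasurableSet.of_discrete (s := {j : Fin N | (j : ℕ) = m}))
  have hind : (fun ω => counterexamplePayoff N (2 * m) (k ω))
      = fun ω => {ω | (k ω : ℕ) = m}.indicator 1 ω - 1 := by
    funext ω
    by_cases h : (k ω : ℕ) = m <;> simp [counterexamplePayoff_two_mul, h]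
  rw [hind, integral_sub ((integrable_const 1).indicator hset) (integrable_const 1),
    integral_indicator_one hset, integral_const, probReal_univ, one_smul]

lemma integral_counterexamplePayoff_two_mul_add_one {k : Ω → Fin N} (hk : Measurable k)
    (m : ℕ) :
    ∫ ω, counterexamplePayoff N (2 * m + 1) (k ω) ∂μ = -μ.real {ω | (k ω : ℕ) ≤ m} := by
  have hset : MeasurableSet {ω | (k ω : ℕ) ≤ m} :=
    hk (MeasurableSet.of_discrete (s := {j : Fin N | (j : ℕ) ≤ m}))
  have hind : (fun ω => counterexamplePayoff N (2 * m + 1) (k ω))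
      = fun ω => -{ω | (k ω : ℕ) ≤ m}.indicator 1 ω := by
    funext ω
    by_cases h : (k ω : ℕ) ≤ m <;> simp [counterexamplePayoff_two_mul_add_one, h]
  rw [hind, integral_neg, integral_indicator_one hset]

lemma integral_regret_counterexample [IsProbabilityMeasure μ] [NeZero N] {k : ℕ → Ω → Fin N}
    (hk : ∀ t, Measurable (k t)) :
    ∫ ω, ((⨆ j : Fin N, ∑ t ∈ range (2 * N), counterexamplePayoff N t j)
        - ∑ t ∈ range (2 * N), counterexamplePayoff N t (k t ω)) ∂μ
      = ∑ m ∈ range N,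
          (μ.real {ω | (k (2 * m + 1) ω : ℕ) ≤ m} - μ.real {ω | (k (2 * m) ω : ℕ) = m}) := by
  have hint : ∀ t, Integrable (fun ω => counterexamplePayoff N t (k t ω)) μ :=
    fun t => (Integrable.of_finite (f := counterexamplePayoff N t)).comp_measurable (hk t)
  rw [integral_sub (integrable_const _) (integrable_finsetSum _ fun t _ => hint t),
    integral_finsetSum _ fun t _ => hint t, integral_const, probReal_univ, one_smul,
    iSup_sum_counterexamplePayoff, sum_range_two_mul]
  simp only [integral_counterexamplePayoff_two_mul (hk _),
    integral_counterexamplePayoff_two_mul_add_one (hk _), sum_add_distrib, sum_sub_distrib,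
    sum_neg_distrib, sum_const, card_range, nsmul_eq_mul, mul_one]
  ring

end Probability

lemma sum_range_inv_sub (N : ℕ) :
    ∑ m ∈ range N, ((N : ℝ) - m)⁻¹ = ∑ j ∈ range N, 1 / ((j : ℝ) + 1) := by
  rw [← sum_range_reflect]
  refine sum_congr rfl fun m hm => ?_
  rw [mem_range] at hm
  rw [one_div, Nat.cast_sub (by omega), Nat.cast_sub (by omega)]
  ring_nf

/-- **Ω(N) lower bound at horizon `T = 2N`.** Sampled fictitious play with
fresh Bernoulli(1/2) sampling (`e t τ = ε^{(t)}_τ`) and uniform tie-breaking (`u t`), all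
variables jointly independent, against the fixed (oblivious) counterexample payoff sequence
`g_1,…,g_{2N}` above, has expected regret at least `N/2 − H_N`, where
`H_N = ∑_{j=1}^N 1/j` is the `N`-th harmonic number. -/
theorem sampled_fictitious_play_counterexample
    {Ω : Type*} [MeasurableSpace Ω] (μ : Measure Ω) [IsProbabilityMeasure μ]
    (N : ℕ) [NeZero N]
    (e : ℕ → ℕ → Ω → ℝ) (u : ℕ → Ω → ℝ)
    (hemeas : ∀ t τ, Measurable (e t τ)) (humeas : ∀ t, Measurable (u t))
    (heRad : ∀ t τ, μ {ω | e t τ ω = 1} = 1 / 2 ∧ μ {ω | e t τ ω = -1} = 1 / 2)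
    (huUnif : ∀ t, μ.map (u t) = volume.restrict (Set.Ico (0 : ℝ) 1))
    (hIndep : iIndepFun
        (fun (p : (ℕ × ℕ) ⊕ ℕ) (ω : Ω) =>
          Sum.elim (fun q => e q.1 q.2 ω) (fun n => u n ω) p) μ)
    (k : ℕ → Ω → Fin N)
    (hplay : ∀ t ω, k t ω = pick (argmaxSet (fun j =>
        ∑ τ ∈ Finset.range t, (1 + e t τ ω) * counterexamplePayoff N τ j)) (u t ω)) :
    (N : ℝ) / 2 - (∑ j ∈ Finset.range N, 1 / ((j : ℝ) + 1))
      ≤ ∫ ω, ((⨆ j : Fin N, ∑ t ∈ Finset.range (2 * N), counterexamplePayoff N t j)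
          - ∑ t ∈ Finset.range (2 * N), counterexamplePayoff N t (k t ω)) ∂μ := by
  obtain rfl : k = sampledPlay e u (counterexamplePayoff N) := funext₂ hplay
  rw [integral_regret_counterexample (measurable_sampledPlay hemeas humeas _),
    ← sum_range_inv_sub]
  calc (N : ℝ) / 2 - ∑ m ∈ range N, ((N : ℝ) - m)⁻¹
      = ∑ m ∈ range N, (1 / 2 - ((N : ℝ) - m)⁻¹) := by
        rw [sum_sub_distrib, sum_const, card_range, nsmul_eq_mul]
        ring
    _ ≤ _ := sum_le_sum fun m hm => sub_le_sub
        (half_le_measureReal_sampledPlay_two_mul_add_one u (mem_range.1 hm) (heRad _ _).1)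
        (measureReal_sampledPlay_two_mul_le hemeas humeas hIndep huUnif (mem_range.1 hm))
end
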